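/- arXiv:1703.10566 — 3 statements merged into one kernel-verified Lean document; each statement's English description precedes it below -/
import Mathlib

section
/- Let G be a connected simple graph with n ≥ 3 vertices and m ≥ n edges. Then the H-vector of the cographic matroid of G satisfies H_{m−n} ≤ (n − 2) · H_{m−n+1}. -/
open Polynomial

/-- A finite loopless multigraph: a finite vertex type, a finite edge type, and an
incidence map sending each edge to the (unordered) pair of its two distinct endpoints. -/
structure Multigraph where
  V : Type
  E : Type
  [fintypeV : Fintype V]
  [decEqV : DecidableEq V]
  [fintypeE : Fintype E]
  [decEqE : DecidableEq E]
  ends : E → Sym2 V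
  loopless : ∀ e, ¬ (ends e).IsDiag

attribute [instance] Multigraph.fintypeV Multigraph.decEqV Multigraph.fintypeE Multigraph.decEqE

namespace Multigraph

/-- The simple graph on `G.V` in which `x` and `y` are adjacent exactly when some edge
of the subset `S` joins them.  (A multigraph spanning subgraph `(V, S)` is connected
iff this simple graph is connected.) -/
def spanningGraph (G : Multigraph) (S : Set G.E) : SimpleGraph G.V where
  Adj x y := x ≠ y ∧ ∃ e ∈ S, G.ends e = s(x, y)
  symm := by
    constructor
    rintro x y ⟨hxy, e, he, h⟩
    exact ⟨hxy.symm, e, he, by rw [h, Sym2.eq_swap]⟩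
  loopless := by constructor; rintro x ⟨hx, -⟩; exact hx rfl

/-- Connectedness of a multigraph. -/
def Connected (G : Multigraph) : Prop := (G.spanningGraph Set.univ).Connected

open scoped Classical in
/-- The all-terminal reliability polynomial of `G`, in the variable `q = X`:
`Rel(G;q) = Σ_{E' ⊆ E, (V,E') connected} (1-q)^{|E'|} q^{|E|-|E'|}`. -/
noncomputable def Rel (G : Multigraph) : Polynomial ℂ :=
  ∑ S : Finset G.E, if (G.spanningGraph ↑S).Connected then
    (1 - X) ^ S.card * X ^ (Fintype.card G.E - S.card) else 0

/-- The condition that the spanning subgraph `(V, S)` has exactly two connected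
components, one containing `u` and the other containing `v`: equivalently, `u` and `v`
cannot communicate, and every vertex can communicate with `u` or with `v`. -/
def SplitState (G : Multigraph) (u v : G.V) (S : Set G.E) : Prop :=
  ¬ (G.spanningGraph S).Reachable u v ∧
    ∀ w : G.V, (G.spanningGraph S).Reachable w u ∨ (G.spanningGraph S).Reachable w v

open scoped Classical in
/-- The `{u,v}`-split reliability polynomial of `G`, in the variable `q = X`. -/
noncomputable def spRel (G : Multigraph) (u v : G.V) : Polynomial ℂ :=
  ∑ S : Finset G.E, if G.SplitState u v ↑S then
    (1 - X) ^ S.card * X ^ (Fintype.card G.E - S.card) else 0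

/-- The condition that every connected component of the spanning subgraph `(V, S)`
contains exactly one vertex of `K`. -/
def SplitStateSet (G : Multigraph) (K : Set G.V) (S : Set G.E) : Prop :=
  ∀ w : G.V, ∃! x : G.V, x ∈ K ∧ (G.spanningGraph S).Reachable w x

open scoped Classical in
/-- The `K`-split reliability polynomial of `G`, in the variable `q = X`. -/
noncomputable def spRelSet (G : Multigraph) (K : Set G.V) : Polynomial ℂ :=
  ∑ S : Finset G.E, if G.SplitStateSet K ↑S then
    (1 - X) ^ S.card * X ^ (Fintype.card G.E - S.card) else 0

open scoped Classical in
/-- `F i` = the number of `i`-subsets of edges whose removal leaves `G` connected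
(the F-vector of the cographic matroid of `G`). -/
noncomputable def Fnum (G : Multigraph) (i : ℕ) : ℕ :=
  (Finset.univ.filter fun S : Finset G.E =>
    S.card = i ∧ (G.spanningGraph ↑(Finset.univ \ S)).Connected).card

/-- `G` is `k`-edge-connected: it is connected and remains connected after deleting
any set of fewer than `k` edges. -/
def EdgeConnected (G : Multigraph) (k : ℕ) : Prop :=
  G.Connected ∧ ∀ D : Finset G.E, D.card < k → (G.spanningGraph {e | e ∉ (D : Set G.E)}).Connected

/-- `G` is 2-connected: connected, at least 3 vertices, and deleting any single vertex
leaves it connected. -/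
def TwoConnected (G : Multigraph) : Prop :=
  G.Connected ∧ 3 ≤ Fintype.card G.V ∧
    ∀ v : G.V, ((G.spanningGraph Set.univ).induce {w : G.V | w ≠ v}).Connected

/-- The (induced) subgraph of `G` on a set `B` of vertices is connected and has no
cut vertex. -/
def NoCutVertex (G : Multigraph) (B : Set G.V) : Prop :=
  ((G.spanningGraph Set.univ).induce B).Connected ∧
    ∀ v ∈ B, ((G.spanningGraph Set.univ).induce (B \ {v})).Connected

/-- `B` is the vertex set of a block of `G`: a maximal subgraph with no cut vertex
(equivalently, a maximal 2-connected subgraph or a bridge together with its endpoints). -/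
def IsBlock (G : Multigraph) (B : Set G.V) : Prop :=
  G.NoCutVertex B ∧ ∀ C : Set G.V, B ⊆ C → G.NoCutVertex C → C = B

/-- Build a multigraph from a symmetric multiplicity function on unordered pairs. -/
def ofWeight (V : Type) [Fintype V] [DecidableEq V] (w : Sym2 V → ℕ)
    (hw : ∀ p : Sym2 V, p.IsDiag → w p = 0) : Multigraph where
  V := V
  E := Σ p : Sym2 V, Fin (w p)
  ends e := e.1
  loopless := by
    rintro ⟨p, i⟩ h
    rw [hw p h] at i
    exact i.elim0

/-- The complete graph on `n` vertices. -/
def completeGraph (n : ℕ) : Multigraph :=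
  ofWeight (Fin n) (fun p => if p.IsDiag then 0 else 1) (by intro p hp; simp [hp])

/-- `completeMinus n` is the complete graph on `n + 2` vertices minus the edge joining
the vertices `0` and `1`; that is, it is `K_{n+2}^-`, with `u = 0` and `v = 1` its
unique nonadjacent pair of vertices. -/
def completeMinus (n : ℕ) : Multigraph :=
  ofWeight (Fin (n + 2))
    (fun p => if p.IsDiag ∨ p = s((0 : Fin (n + 2)), 1) then 0 else 1)
    (by intro p hp; simp [hp])

/-- The multiplicity function of `G_{m,n}^{a,b}`: `a` parallel edges inside each part,
`b` parallel edges across, no loops. -/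
def gWeight (m n a b : ℕ) : Sym2 (Fin m ⊕ Fin n) → ℕ :=
  Sym2.lift ⟨fun x y => if x = y then 0 else if x.isLeft = y.isLeft then a else b, by
    intro x y
    by_cases h : x = y
    · simp [h]
    · have h' : y ≠ x := fun hh => h hh.symm
      have hl : (x.isLeft = y.isLeft) = (y.isLeft = x.isLeft) := propext ⟨Eq.symm, Eq.symm⟩
      simp only [if_neg h, if_neg h', hl]⟩

/-- The multigraph `G_{m,n}^{a,b}`: disjoint complete graphs `K_m` and `K_n` with each
edge replaced by `a` parallel edges, and every pair of vertices in different parts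
joined by `b` parallel edges. -/
def Gmnab (m n a b : ℕ) : Multigraph :=
  ofWeight (Fin m ⊕ Fin n) (gWeight m n a b) (by
    intro p hp
    induction p using Sym2.ind with
    | _ x y =>
      rw [Sym2.mk_isDiag_iff] at hp
      simp [gWeight, Sym2.lift_mk, hp])

/-- Replace every edge of `G` by a bundle of `k` parallel edges. -/
def bundle (G : Multigraph) (k : ℕ) : Multigraph where
  V := G.V
  E := G.E × Fin k
  ends e := G.ends e.1
  loopless e := G.loopless e.1

/-- The vertex map used in an edge substitution: the endpoints `u`, `v` of the gadget
are identified with the two ends (given by the orientation `ori`) of the edge `e`, and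
the internal vertices of the gadget get their own private copies. -/
def subVertex (G H : Multigraph) (u v : H.V) (ori : G.E → G.V × G.V) (e : G.E)
    (x : H.V) : G.V ⊕ (G.E × {x : H.V // x ≠ u ∧ x ≠ v}) :=
  if hx : x = u then Sum.inl (ori e).1
  else if hx' : x = v then Sum.inl (ori e).2
  else Sum.inr (e, ⟨x, hx, hx'⟩)

/-- The edge substitution `G[H(u,v)]` determined by the orientation `ori` of the edges
of `G`: every edge `{x,y}` of `G` is replaced by a copy of `H`, identifying `u` with
`x` and `v` with `y`. -/
def edgeSub (G H : Multigraph) (u v : H.V) (ori : G.E → G.V × G.V)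
    (hori : ∀ e, s((ori e).1, (ori e).2) = G.ends e) : Multigraph where
  V := G.V ⊕ (G.E × {x : H.V // x ≠ u ∧ x ≠ v})
  E := G.E × H.E
  ends f := (H.ends f.2).map (subVertex G H u v ori f.1)
  loopless := by
    rintro ⟨e, f⟩ h
    have hne : (ori e).1 ≠ (ori e).2 := by
      have hd := G.loopless e
      rw [← hori e, Sym2.mk_isDiag_iff] at hd
      exact hd
    have hinj : Function.Injective (subVertex G H u v ori e) := by
      intro x y hxy
      unfold subVertex at hxy
      split_ifs at hxy <;> simp_all
    rw [Sym2.isDiag_map hinj] at h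
    exact H.loopless f h

/-- The disjoint union of a finite family of multigraphs. -/
def disjUnion {k : ℕ} (H : Fin k → Multigraph) : Multigraph where
  V := Σ i, (H i).V
  E := Σ i, (H i).E
  ends e := ((H e.1).ends e.2).map (Sigma.mk e.1)
  loopless := by
    rintro ⟨i, e⟩ h
    rw [Sym2.isDiag_map sigma_mk_injective] at h
    exact (H i).loopless e h

end Multigraph

namespace Multigraph

/-- The first vertex (`u`) of the unique nonadjacent pair of `completeMinus n`. -/
def cmU (n : ℕ) : (completeMinus n).V := (0 : Fin (n + 2))

/-- The second vertex (`v`) of the unique nonadjacent pair of `completeMinus n`. -/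
def cmV (n : ℕ) : (completeMinus n).V := (1 : Fin (n + 2))

end Multigraph
namespace Multigraph

open Finset SimpleGraph

variable {G : Multigraph}

/-- Reachability in the spanning subgraph determined by a finite edge set. -/
abbrev Rch (G : Multigraph) (S : Finset G.E) (x y : G.V) : Prop :=
  (G.spanningGraph (↑S : Set G.E)).Reachable x y

/-- Connectivity of the spanning subgraph determined by a finite edge set. -/
abbrev Cn (G : Multigraph) (S : Finset G.E) : Prop :=
  (G.spanningGraph (↑S : Set G.E)).Connected

lemma exists_ends (G : Multigraph) (e : G.E) : ∃ a b : G.V, a ≠ b ∧ G.ends e = s(a, b) := by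
  have key : ∀ p : Sym2 G.V, ¬ p.IsDiag → ∃ a b : G.V, a ≠ b ∧ p = s(a, b) := by
    intro p
    induction p using Sym2.ind with
    | _ a b =>
      intro hp
      refine ⟨a, b, ?_, rfl⟩
      intro hab
      exact hp (by rw [Sym2.mk_isDiag_iff]; exact hab)
  exact key _ (G.loopless e)

lemma spanningGraph_mono {S S' : Finset G.E} (h : S ⊆ S') :
    G.spanningGraph ↑S ≤ G.spanningGraph ↑S' := by
  rintro x y ⟨hxy, e, he, hends⟩
  exact ⟨hxy, e, h he, hends⟩

lemma rch_mono {S S' : Finset G.E} (h : S ⊆ S') {x y : G.V} (hr : G.Rch S x y) :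
    G.Rch S' x y :=
  SimpleGraph.Reachable.mono (spanningGraph_mono h) hr

lemma rch_edge {S : Finset G.E} {e : G.E} (he : e ∈ S) {a b : G.V}
    (hends : G.ends e = s(a, b)) : G.Rch S a b := by
  have hab : a ≠ b := by
    intro h
    exact G.loopless e (by rw [hends, Sym2.mk_isDiag_iff]; exact h)
  exact SimpleGraph.Adj.reachable ⟨hab, e, he, hends⟩

/-- Walks avoiding (the ends of) an edge transfer to the graph with that edge erased. -/
lemma rch_of_walk_avoid {S : Finset G.E} {e : G.E} {x y : G.V}
    (w : (G.spanningGraph (↑S : Set G.E)).Walk x y) (hw : G.ends e ∉ w.edges) :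
    G.Rch (S.erase e) x y := by
  induction w with
  | nil => exact Reachable.refl _
  | cons h p ih =>
    obtain ⟨hne, e', he', hends⟩ := id h
    rw [SimpleGraph.Walk.edges_cons] at hw
    simp only [List.mem_cons, not_or] at hw
    have he'e : e' ≠ e := by
      rintro rfl
      exact (hw.1 hends).elim
    have h1 : G.Rch (S.erase e) _ _ :=
      rch_edge (Finset.mem_erase.mpr ⟨he'e, he'⟩) hends
    exact h1.trans (ih hw.2)

/-- Decomposition of reachability when one edge is removed. -/
lemma rch_decomp {S : Finset G.E} {e : G.E} {a b : G.V} (he : G.ends e = s(a, b))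
    {x y : G.V} (h : G.Rch S x y) :
    G.Rch (S.erase e) x y ∨ (G.Rch (S.erase e) x a ∧ G.Rch (S.erase e) b y) ∨
      (G.Rch (S.erase e) x b ∧ G.Rch (S.erase e) a y) := by
  obtain ⟨w⟩ := h
  induction w with
  | nil => exact Or.inl (Reachable.refl _)
  | @cons u z y h p ih =>
    obtain ⟨hne, e', he', hends⟩ := h
    by_cases hee : e' = e
    · subst hee
      have hsym : s(u, z) = s(a, b) := hends.symm.trans he
      rw [Sym2.eq_iff] at hsym
      rcases hsym with ⟨rfl, rfl⟩ | ⟨rfl, rfl⟩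
      · rcases ih with hzy | ⟨hza, hby⟩ | ⟨hzb, hay⟩
        · exact Or.inr (Or.inl ⟨Reachable.refl _, hzy⟩)
        · exact Or.inr (Or.inl ⟨Reachable.refl _, hby⟩)
        · exact Or.inl hay
      · rcases ih with hzy | ⟨hza, hby⟩ | ⟨hzb, hay⟩
        · exact Or.inr (Or.inr ⟨Reachable.refl _, hzy⟩)
        · exact Or.inl hby
        · exact Or.inr (Or.inr ⟨Reachable.refl _, hay⟩)
    · have h1 : G.Rch (S.erase e) u z := rch_edge (Finset.mem_erase.mpr ⟨hee, he'⟩) hends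
      rcases ih with hzy | ⟨hza, hby⟩ | ⟨hzb, hay⟩
      · exact Or.inl (h1.trans hzy)
      · exact Or.inr (Or.inl ⟨h1.trans hza, hby⟩)
      · exact Or.inr (Or.inr ⟨h1.trans hzb, hay⟩)

lemma rch_erase_of_rch {S : Finset G.E} {e : G.E} {a b : G.V} (he : G.ends e = s(a, b))
    (hab : G.Rch (S.erase e) a b) {x y : G.V} (h : G.Rch S x y) :
    G.Rch (S.erase e) x y := by
  rcases rch_decomp he h with h1 | ⟨h1, h2⟩ | ⟨h1, h2⟩
  · exact h1
  · exact (h1.trans hab).trans h2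
  · exact (h1.trans hab.symm).trans h2

lemma rch_erase_or {S : Finset G.E} {e : G.E} {a b : G.V} (he : G.ends e = s(a, b))
    {v : G.V} (h : G.Rch S v a) :
    G.Rch (S.erase e) v a ∨ G.Rch (S.erase e) v b := by
  rcases rch_decomp he h with h1 | ⟨h1, h2⟩ | ⟨h1, h2⟩
  · exact Or.inl h1
  · exact Or.inl h1
  · exact Or.inr h1

lemma exists_cross {S Q : Finset G.E} {x y : G.V} (h : G.Rch S x y) (hQ : ¬ G.Rch Q x y) :
    ∃ e ∈ S, ∃ u v : G.V, G.ends e = s(u, v) ∧ ¬ G.Rch Q u v := by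
  obtain ⟨w⟩ := h
  induction w with
  | nil => exact absurd (Reachable.refl _) hQ
  | @cons u z y h p ih =>
    obtain ⟨hne, e', he', hends⟩ := h
    by_cases huz : G.Rch Q u z
    · obtain ⟨e, he, hcross⟩ := ih (fun hzy => hQ (huz.trans hzy))
      exact ⟨e, he, hcross⟩
    · exact ⟨e', he', u, z, hends, huz⟩

lemma cn_iff {S : Finset G.E} : G.Cn S ↔ Nonempty G.V ∧ ∀ x y : G.V, G.Rch S x y := by
  constructor
  · exact fun h => ⟨h.nonempty, fun x y => h.preconnected x y⟩
  · rintro ⟨h1, h2⟩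
    exact SimpleGraph.Connected.mk (fun x y => h2 x y)

lemma cn_mono {S S' : Finset G.E} (h : G.Cn S) (hss : S ⊆ S') : G.Cn S' := by
  rw [cn_iff] at h ⊢
  exact ⟨h.1, fun x y => rch_mono hss (h.2 x y)⟩

end Multigraph
namespace Multigraph

open Finset SimpleGraph

variable {G : Multigraph}

/-- A spanning tree, as an edge set: connected with `|V| - 1` edges. -/
def IsTreeSet (G : Multigraph) (T : Finset G.E) : Prop :=
  G.Cn T ∧ T.card + 1 = Fintype.card G.V

lemma exists_treeSet {S : Finset G.E} (h : G.Cn S) : ∃ T ⊆ S, G.IsTreeSet T := by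
  classical
  obtain ⟨r⟩ := h.nonempty
  set GS := G.spanningGraph (↑S : Set G.E) with hGS
  have key : ∀ v : G.V, v ≠ r → ∃ p : G.E × G.V, p.1 ∈ S ∧ G.ends p.1 = s(v, p.2) ∧
      GS.dist p.2 r < GS.dist v r := by
    intro v hv
    have hre : GS.Reachable v r := h.preconnected v r
    obtain ⟨w, hw⟩ := hre.exists_walk_length_eq_dist
    have hpos : 0 < GS.dist v r := hre.pos_dist_of_ne hv
    cases w with
    | nil => rw [SimpleGraph.Walk.length_nil] at hw; omega
    | @cons _ u _ hadj p =>
      obtain ⟨hne, e, he, hends⟩ := id hadj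
      refine ⟨(e, u), he, hends, ?_⟩
      show GS.dist u r < GS.dist v r
      have h1 := SimpleGraph.dist_le p
      rw [SimpleGraph.Walk.length_cons] at hw
      omega
  let D : Finset G.V := Finset.univ.erase r
  let esel : {v // v ∈ D} → G.E := fun v => (key v.1 (Finset.ne_of_mem_erase v.2)).choose.1
  let usel : {v // v ∈ D} → G.V := fun v => (key v.1 (Finset.ne_of_mem_erase v.2)).choose.2
  have hspec : ∀ v : {v // v ∈ D}, esel v ∈ S ∧ G.ends (esel v) = s(v.1, usel v) ∧
      GS.dist (usel v) r < GS.dist v.1 r :=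
    fun v => (key v.1 (Finset.ne_of_mem_erase v.2)).choose_spec
  let T : Finset G.E := D.attach.image esel
  have hTS : T ⊆ S := by
    intro e he
    obtain ⟨v, _, rfl⟩ := Finset.mem_image.mp he
    exact (hspec v).1
  have hinj : Set.InjOn esel ↑D.attach := by
    intro v _ v' _ hvv'
    have h1 := (hspec v).2.1
    have h2 := (hspec v').2.1
    rw [hvv'] at h1
    have hsym := h1.symm.trans h2
    rw [Sym2.eq_iff] at hsym
    rcases hsym with ⟨hv, _⟩ | ⟨hv, hu⟩
    · exact Subtype.ext hv
    · have d1 := (hspec v).2.2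
      have d2 := (hspec v').2.2
      rw [← hv] at d2
      rw [hu] at d1
      omega
  have hconn : ∀ k, ∀ v : G.V, GS.dist v r = k → G.Rch T v r := by
    intro k
    induction k using Nat.strong_induction_on with
    | _ k ih =>
      intro v hk
      by_cases hv : v = r
      · subst hv; exact Reachable.refl _
      · have hvD : v ∈ D := Finset.mem_erase.mpr ⟨hv, Finset.mem_univ _⟩
        have hmem : esel ⟨v, hvD⟩ ∈ T :=
          Finset.mem_image.mpr ⟨⟨v, hvD⟩, Finset.mem_attach _ _, rfl⟩
        have h1 : G.Rch T v (usel ⟨v, hvD⟩) := rch_edge hmem (hspec ⟨v, hvD⟩).2.1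
        have h2 : G.Rch T (usel ⟨v, hvD⟩) r := by
          refine ih (GS.dist (usel ⟨v, hvD⟩) r) ?_ _ rfl
          rw [← hk]
          exact (hspec ⟨v, hvD⟩).2.2
        exact h1.trans h2
  refine ⟨T, hTS, ?_, ?_⟩
  · rw [cn_iff]
    exact ⟨⟨r⟩, fun x y => (hconn _ x rfl).trans (hconn _ y rfl).symm⟩
  · have hc1 : T.card = D.card := by
      rw [Finset.card_image_of_injOn hinj, Finset.card_attach]
    have hc2 : D.card = Fintype.card G.V - 1 := by
      simp [D, Finset.card_erase_of_mem, Finset.card_univ]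
    have : 0 < Fintype.card G.V := Fintype.card_pos_iff.mpr ⟨r⟩
    omega

lemma card_of_cn {S : Finset G.E} (h : G.Cn S) : Fintype.card G.V ≤ S.card + 1 := by
  obtain ⟨T, hTS, hT⟩ := exists_treeSet h
  have h1 := Finset.card_le_card hTS
  have h2 := hT.2
  omega

lemma not_cn_erase {T : Finset G.E} (hT : G.IsTreeSet T) {e : G.E} (he : e ∈ T) :
    ¬ G.Cn (T.erase e) := by
  intro h
  have h1 := card_of_cn h
  rw [Finset.card_erase_of_mem he] at h1
  have h2 := Finset.card_pos.mpr ⟨e, he⟩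
  have h3 := hT.2
  omega

lemma not_rch_erase_ends {T : Finset G.E} (hT : G.IsTreeSet T) {e : G.E} (he : e ∈ T)
    {a b : G.V} (hends : G.ends e = s(a, b)) : ¬ G.Rch (T.erase e) a b := by
  intro hab
  refine not_cn_erase hT he ?_
  rw [cn_iff]
  exact ⟨hT.1.nonempty, fun x y => rch_erase_of_rch hends hab (hT.1.preconnected x y)⟩

open scoped Classical in
/-- The (edge set of the) fundamental cycle of `g` with respect to `T`:
all edges of `insert g T` whose removal from `insert g T` leaves it connected. -/
noncomputable def cyc (G : Multigraph) (T : Finset G.E) (g : G.E) : Finset G.E :=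
  (insert g T).filter (fun h => G.Cn ((insert g T).erase h))

lemma cyc_subset {T : Finset G.E} {g : G.E} : G.cyc T g ⊆ insert g T := by
  classical
  exact Finset.filter_subset _ _

lemma mem_cyc_of_ne {T : Finset G.E} {g x : G.E} (hx : x ∈ G.cyc T g) (hxg : x ≠ g) :
    x ∈ T := by
  classical
  rcases Finset.mem_insert.mp (cyc_subset hx) with h | h
  · exact absurd h hxg
  · exact h

lemma self_mem_cyc {T : Finset G.E} {g : G.E} (hg : g ∉ T) (hT : G.Cn T) : g ∈ G.cyc T g := by
  classical
  rw [cyc, Finset.mem_filter]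
  exact ⟨Finset.mem_insert_self _ _, by rwa [Finset.erase_insert hg]⟩

lemma isTreeSet_of_mem_cyc {T : Finset G.E} (hT : G.IsTreeSet T) {g f : G.E} (hg : g ∉ T)
    (hf : f ∈ G.cyc T g) : G.IsTreeSet ((insert g T).erase f) := by
  classical
  rw [cyc, Finset.mem_filter] at hf
  refine ⟨hf.2, ?_⟩
  rw [Finset.card_erase_of_mem hf.1, Finset.card_insert_of_notMem hg]
  have := hT.2
  omega

/-- Characterization of the fundamental cycle via separation. -/
lemma mem_cyc_iff {T : Finset G.E} (hT : G.IsTreeSet T) {g : G.E} (hg : g ∉ T)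
    {c d : G.V} (hends : G.ends g = s(c, d)) {x : G.E} (hx : x ≠ g) :
    x ∈ G.cyc T g ↔ x ∈ T ∧ ¬ G.Rch (T.erase x) c d := by
  classical
  have hgx : g ∉ T.erase x := fun h => hg (Finset.mem_of_mem_erase h)
  have hset : (insert g T).erase x = insert g (T.erase x) :=
    Finset.erase_insert_of_ne (fun h => hx h.symm)
  constructor
  · rintro hmem
    rw [cyc, Finset.mem_filter] at hmem
    have hxT : x ∈ T := by
      rcases Finset.mem_insert.mp hmem.1 with h | h
      · exact absurd h hx
      · exact h
    refine ⟨hxT, ?_⟩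
    intro hcd
    have hc : G.Cn (insert g (T.erase x)) := by rw [← hset]; exact hmem.2
    have hcd' : G.Rch ((insert g (T.erase x)).erase g) c d := by
      rwa [Finset.erase_insert hgx]
    have hc2 : G.Cn ((insert g (T.erase x)).erase g) := by
      rw [cn_iff]
      exact ⟨hc.nonempty, fun v w => rch_erase_of_rch hends hcd' (hc.preconnected v w)⟩
    rw [Finset.erase_insert hgx] at hc2
    exact not_cn_erase hT hxT hc2
  · rintro ⟨hxT, hncd⟩
    rw [cyc, Finset.mem_filter]
    refine ⟨Finset.mem_insert_of_mem hxT, ?_⟩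
    rw [hset]
    obtain ⟨p, q, hpq, hpqe⟩ := exists_ends G x
    have hsub : T.erase x ⊆ insert g (T.erase x) := Finset.subset_insert _ _
    have hgedge : G.Rch (insert g (T.erase x)) c d :=
      rch_edge (Finset.mem_insert_self _ _) hends
    have hcp := rch_erase_or hpqe (hT.1.preconnected c p)
    have hdp := rch_erase_or hpqe (hT.1.preconnected d p)
    have hpq' : G.Rch (insert g (T.erase x)) p q := by
      rcases hcp with h1 | h1 <;> rcases hdp with h2 | h2
      · exact absurd (h1.trans h2.symm) hncd
      · exact (rch_mono hsub h1.symm).trans (hgedge.trans (rch_mono hsub h2))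
      · exact (rch_mono hsub h2.symm).trans (hgedge.symm.trans (rch_mono hsub h1))
      · exact absurd (h1.trans h2.symm) hncd
    rw [cn_iff]
    refine ⟨hT.1.nonempty, fun v w => ?_⟩
    rcases rch_decomp hpqe (hT.1.preconnected v w) with h1 | ⟨h1, h2⟩ | ⟨h1, h2⟩
    · exact rch_mono hsub h1
    · exact ((rch_mono hsub h1).trans hpq').trans (rch_mono hsub h2)
    · exact ((rch_mono hsub h1).trans hpq'.symm).trans (rch_mono hsub h2)

/-- In a simple graph, every fundamental cycle contains at least two tree edges. -/
lemma exists_two_in_cyc (hsimple : Function.Injective G.ends) {T : Finset G.E}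
    (hT : G.IsTreeSet T) {g : G.E} (hg : g ∉ T) :
    ∃ e₁ e₂ : G.E, e₁ ≠ e₂ ∧ e₁ ∈ (G.cyc T g).erase g ∧ e₂ ∈ (G.cyc T g).erase g := by
  obtain ⟨c, d, hcd, hends⟩ := exists_ends G g
  obtain ⟨w0⟩ : G.Rch T c d := hT.1.preconnected c d
  obtain ⟨q, hq⟩ := w0.toPath
  cases q with
  | nil => exact absurd rfl hcd
  | @cons _ v₁ _ h1 q1 =>
    cases q1 with
    | nil =>
      obtain ⟨hne1, e₁, he₁, hE1⟩ := h1
      have : e₁ = g := hsimple (hE1.trans hends.symm)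
      subst this
      exact absurd he₁ hg
    | @cons _ v₂ _ h2 q2 =>
      obtain ⟨hne1, e₁, he₁, hE1⟩ := id h1
      obtain ⟨hne2, e₂, he₂, hE2⟩ := id h2
      have hnd := hq.support_nodup
      simp only [SimpleGraph.Walk.support_cons, List.nodup_cons] at hnd
      have hcv2 : c ≠ v₂ := by
        intro h
        exact hnd.1 (by rw [h]; exact List.mem_cons_of_mem _ (SimpleGraph.Walk.start_mem_support q2))
      have he12 : e₁ ≠ e₂ := by
        intro h
        have hsym : s(c, v₁) = s(v₁, v₂) := by rw [← hE1, h, hE2]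
        rw [Sym2.eq_iff] at hsym
        rcases hsym with ⟨h1', h2'⟩ | ⟨h1', _⟩
        · exact hne2 (h1' ▸ h2')
        · exact hcv2 h1'
      have hed := hq.edges_nodup
      simp only [SimpleGraph.Walk.edges_cons, List.nodup_cons, List.mem_cons, not_or] at hed
      have claim1 : ¬ G.Rch (T.erase e₁) c d := by
        intro hR
        have h1d : G.Rch (T.erase e₁) v₁ d := by
          refine rch_of_walk_avoid (SimpleGraph.Walk.cons ⟨hne2, e₂, he₂, hE2⟩ q2) ?_
          rw [hE1]; change s(c, v₁) ∉ s(v₁, v₂) :: q2.edges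
          intro hmem
          rcases List.mem_cons.mp hmem with h | h
          · exact hed.1.1 h
          · exact hed.1.2 h
        exact not_rch_erase_ends hT he₁ hE1 (hR.trans h1d.symm)
      have claim2 : ¬ G.Rch (T.erase e₂) c d := by
        intro hR
        have hcv1 : G.Rch (T.erase e₂) c v₁ :=
          rch_edge (Finset.mem_erase.mpr ⟨he12, he₁⟩) hE1
        have hv2d : G.Rch (T.erase e₂) v₂ d := by
          refine rch_of_walk_avoid q2 ?_
          rw [hE2]
          exact hed.2.1
        exact not_rch_erase_ends hT he₂ hE2 (hcv1.symm.trans (hR.trans hv2d.symm))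
      have hg1 : e₁ ≠ g := fun h => hg (h ▸ he₁)
      have hg2 : e₂ ≠ g := fun h => hg (h ▸ he₂)
      refine ⟨e₁, e₂, he12, ?_, ?_⟩
      · exact Finset.mem_erase.mpr ⟨hg1, (mem_cyc_iff hT hg hends hg1).mpr ⟨he₁, claim1⟩⟩
      · exact Finset.mem_erase.mpr ⟨hg2, (mem_cyc_iff hT hg hends hg2).mpr ⟨he₂, claim2⟩⟩

end Multigraph
namespace Multigraph

open Finset SimpleGraph

variable {G : Multigraph} [LinearOrder G.E]

open scoped Classical in
/-- Edges that are externally passive for the spanning tree `T`: not in `T`, and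
maximal on their fundamental cycle. -/
noncomputable def epSet (G : Multigraph) [LinearOrder G.E] (T : Finset G.E) : Finset G.E :=
  Finset.univ.filter (fun g => g ∉ T ∧ ∀ x ∈ G.cyc T g, x ≤ g)

/-- `T` is the (unique) minimal spanning tree of the connected edge set `S`. -/
def MstP (G : Multigraph) [LinearOrder G.E] (S T : Finset G.E) : Prop :=
  G.IsTreeSet T ∧ T ⊆ S ∧ ∀ g ∈ S, g ∉ T → ∀ x ∈ G.cyc T g, x ≤ g

lemma wcard_lt {x y : G.E} (h : x < y) :
    (Finset.univ.filter (fun z : G.E => z < x)).card <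
      (Finset.univ.filter (fun z : G.E => z < y)).card := by
  classical
  apply Finset.card_lt_card
  rw [Finset.ssubset_iff_of_subset]
  · exact ⟨x, by simp [h], by simp⟩
  · intro z hz
    simp only [Finset.mem_filter, Finset.mem_univ, true_and] at hz ⊢
    exact hz.trans h

lemma mstP_exists {S : Finset G.E} (h : G.Cn S) : ∃ T, G.MstP S T := by
  classical
  obtain ⟨T₀, hT₀S, hT₀⟩ := exists_treeSet h
  have hne : (S.powerset.filter (fun T => G.IsTreeSet T)).Nonempty :=
    ⟨T₀, Finset.mem_filter.mpr ⟨Finset.mem_powerset.mpr hT₀S, hT₀⟩⟩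
  obtain ⟨T, hTmem, hTmin⟩ := Finset.exists_min_image _
    (fun T => ∑ x ∈ T, (Finset.univ.filter (fun z : G.E => z < x)).card) hne
  rw [Finset.mem_filter, Finset.mem_powerset] at hTmem
  refine ⟨T, hTmem.2, hTmem.1, ?_⟩
  intro g hgS hgT x hxC
  by_contra hgx
  push_neg at hgx
  have hxg : x ≠ g := ne_of_gt hgx
  have hxT : x ∈ T := mem_cyc_of_ne hxC hxg
  have hT' := isTreeSet_of_mem_cyc hTmem.2 hgT hxC
  have hT'S : (insert g T).erase x ⊆ S := by
    intro z hz
    rcases Finset.mem_insert.mp (Finset.mem_of_mem_erase hz) with h1 | h1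
    · exact h1 ▸ hgS
    · exact hTmem.1 h1
  have hmin := hTmin _ (Finset.mem_filter.mpr ⟨Finset.mem_powerset.mpr hT'S, hT'⟩)
  have hxmem : x ∈ insert g T := Finset.mem_insert_of_mem hxT
  have e1 := Finset.sum_erase_add (insert g T)
    (fun x => (Finset.univ.filter (fun z : G.E => z < x)).card) hxmem
  have e2 := Finset.sum_insert (f := fun x => (Finset.univ.filter (fun z : G.E => z < x)).card)
    hgT
  have e3 := wcard_lt hgx
  beta_reduce at e1 e2 hmin
  omega

lemma mstP_aux {S T₁ T₂ : Finset G.E} (h1 : G.MstP S T₁) (h2 : G.MstP S T₂)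
    {f : G.E} (hf2 : f ∈ T₂) (hf1 : f ∉ T₁)
    (hmax : ∀ x, x ∈ T₁ → x ∉ T₂ → x ≤ f) : False := by
  obtain ⟨a, b, hab, hends⟩ := exists_ends G f
  have hnab : ¬ G.Rch (T₂.erase f) a b := not_rch_erase_ends h2.1 hf2 hends
  have hab1 : G.Rch T₁ a b := h1.1.1.preconnected a b
  obtain ⟨f', hf'T₁, u, v, hf'e, hncross⟩ := exists_cross hab1 hnab
  have hf'f : f' ≠ f := fun h => hf1 (h ▸ hf'T₁)
  have hf'T₂ : f' ∉ T₂ := by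
    intro hmem
    exact hncross (rch_edge (Finset.mem_erase.mpr ⟨hf'f, hmem⟩) hf'e)
  have hfcyc : f ∈ G.cyc T₂ f' :=
    (mem_cyc_iff h2.1 hf'T₂ hf'e (fun h => hf'f h.symm)).mpr ⟨hf2, hncross⟩
  have hle1 : f ≤ f' := h2.2.2 f' (h1.2.1 hf'T₁) hf'T₂ f hfcyc
  have hle2 : f' ≤ f := hmax f' hf'T₁ hf'T₂
  cases le_antisymm hle2 hle1
  exact hf1 hf'T₁

lemma mstP_unique {S T₁ T₂ : Finset G.E} (h1 : G.MstP S T₁) (h2 : G.MstP S T₂) :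
    T₁ = T₂ := by
  classical
  by_contra hne
  have hΔ : ((T₁ \ T₂) ∪ (T₂ \ T₁)).Nonempty := by
    rw [Finset.nonempty_iff_ne_empty]
    intro h
    rw [Finset.union_eq_empty] at h
    exact hne (Finset.Subset.antisymm
      (Finset.sdiff_eq_empty_iff_subset.mp h.1) (Finset.sdiff_eq_empty_iff_subset.mp h.2))
  have hfmem := Finset.max'_mem _ hΔ
  have hmax : ∀ x ∈ (T₁ \ T₂) ∪ (T₂ \ T₁), x ≤ ((T₁ \ T₂) ∪ (T₂ \ T₁)).max' hΔ :=
    fun x hx => Finset.le_max' _ x hx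
  rcases Finset.mem_union.mp hfmem with hf | hf
  · rw [Finset.mem_sdiff] at hf
    exact mstP_aux h2 h1 hf.1 hf.2
      (fun x hx1 hx2 => hmax x (Finset.mem_union_right _ (Finset.mem_sdiff.mpr ⟨hx1, hx2⟩)))
  · rw [Finset.mem_sdiff] at hf
    exact mstP_aux h1 h2 hf.1 hf.2
      (fun x hx1 hx2 => hmax x (Finset.mem_union_left _ (Finset.mem_sdiff.mpr ⟨hx1, hx2⟩)))

open scoped Classical in
noncomputable def mstFun (G : Multigraph) [LinearOrder G.E] (S : Finset G.E) : Finset G.E :=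
  if h : ∃ T, G.MstP S T then h.choose else ∅

lemma mstFun_spec {S : Finset G.E} (h : G.Cn S) : G.MstP S (G.mstFun S) := by
  rw [mstFun, dif_pos (mstP_exists h)]
  exact (mstP_exists h).choose_spec

lemma mstFun_eq {S T : Finset G.E} (hT : G.MstP S T) : G.mstFun S = T := by
  have hex : ∃ T, G.MstP S T := ⟨T, hT⟩
  rw [mstFun, dif_pos hex]
  exact mstP_unique hex.choose_spec hT

end Multigraph
namespace Multigraph

open Finset SimpleGraph Polynomial

variable {G : Multigraph} [LinearOrder G.E]

open scoped Classical in
noncomputable def treesF (G : Multigraph) : Finset (Finset G.E) :=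
  Finset.univ.filter (fun T => G.IsTreeSet T)

noncomputable def epn (G : Multigraph) [LinearOrder G.E] (T : Finset G.E) : ℕ :=
  (G.epSet T).card

lemma mem_epSet {T : Finset G.E} {g : G.E} :
    g ∈ G.epSet T ↔ g ∉ T ∧ ∀ x ∈ G.cyc T g, x ≤ g := by
  classical
  rw [epSet, Finset.mem_filter]
  simp only [Finset.mem_univ, true_and]

lemma mem_treesF {T : Finset G.E} : T ∈ G.treesF ↔ G.IsTreeSet T := by
  classical
  rw [treesF, Finset.mem_filter]
  simp only [Finset.mem_univ, true_and]

lemma epn_le {T : Finset G.E} : G.epn T ≤ Fintype.card G.E - T.card := by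
  classical
  have hsub : G.epSet T ⊆ Finset.univ \ T := by
    intro g hg
    exact Finset.mem_sdiff.mpr ⟨Finset.mem_univ _, (mem_epSet.mp hg).1⟩
  have h1 := Finset.card_le_card hsub
  rw [Finset.card_sdiff_of_subset (Finset.subset_univ _), Finset.card_univ] at h1
  exact h1

lemma sum_powerset_one {α : Type*} [DecidableEq α] (P : Finset α) :
    ∑ t ∈ P.powerset, ((1 : Polynomial ℂ) - X) ^ t.card * X ^ (P.card - t.card) = 1 := by
  have key := Finset.prod_add (fun _ : α => (1 : Polynomial ℂ) - X) (fun _ => (X : Polynomial ℂ)) P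
  simp only [sub_add_cancel, Finset.prod_const_one, Finset.prod_const] at key
  calc ∑ t ∈ P.powerset, ((1 : Polynomial ℂ) - X) ^ t.card * X ^ (P.card - t.card)
      = ∑ t ∈ P.powerset, ((1 : Polynomial ℂ) - X) ^ t.card * X ^ (P \ t).card :=
        Finset.sum_congr rfl (fun t ht => by
          rw [Finset.card_sdiff_of_subset (Finset.mem_powerset.mp ht)])
    _ = 1 := key.symm

open scoped Classical in
noncomputable def connF (G : Multigraph) : Finset (Finset G.E) :=
  Finset.univ.filter (fun S => G.Cn S)

open scoped Classical in
lemma rel_eq_filter :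
    G.Rel = ∑ S ∈ G.connF, (1 - X : Polynomial ℂ) ^ S.card * X ^ (Fintype.card G.E - S.card) := by
  rw [Rel, connF, Finset.sum_filter]

lemma rel_eq_trees :
    G.Rel = ∑ T ∈ G.treesF, (1 - X : Polynomial ℂ) ^ (Fintype.card G.V - 1) *
      X ^ (Fintype.card G.E - (Fintype.card G.V - 1) - G.epn T) := by
  classical
  rw [rel_eq_filter]
  have step1 : (∑ S ∈ G.connF, (1 - X : Polynomial ℂ) ^ S.card * X ^ (Fintype.card G.E - S.card))
      = ∑ q ∈ G.treesF.sigma (fun T => (G.epSet T).powerset),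
          (1 - X : Polynomial ℂ) ^ (q.1 ∪ q.2).card * X ^ (Fintype.card G.E - (q.1 ∪ q.2).card) := by
    refine Finset.sum_nbij' (i := fun S => (⟨G.mstFun S, S \ G.mstFun S⟩ :
        (_ : Finset G.E) × Finset G.E)) (j := fun q => q.1 ∪ q.2) ?_ ?_ ?_ ?_ ?_
    · intro S hS
      rw [connF, Finset.mem_filter] at hS
      have hP := mstFun_spec hS.2
      rw [Finset.mem_sigma]
      constructor
      · exact mem_treesF.mpr hP.1
      · rw [Finset.mem_powerset]
        intro g hg
        rw [Finset.mem_sdiff] at hg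
        exact mem_epSet.mpr ⟨hg.2, hP.2.2 g hg.1 hg.2⟩
    · intro q hq
      rw [Finset.mem_sigma, mem_treesF, Finset.mem_powerset] at hq
      rw [connF, Finset.mem_filter]
      exact ⟨Finset.mem_univ _, cn_mono hq.1.1 Finset.subset_union_left⟩
    · intro S hS
      rw [connF, Finset.mem_filter] at hS
      have hP := mstFun_spec hS.2
      simp only
      exact Finset.union_sdiff_of_subset hP.2.1
    · intro q hq
      rw [Finset.mem_sigma, mem_treesF, Finset.mem_powerset] at hq
      have hdisj : ∀ g ∈ q.2, g ∉ q.1 := fun g hg => (mem_epSet.mp (hq.2 hg)).1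
      have hP : G.MstP (q.1 ∪ q.2) q.1 := by
        refine ⟨hq.1, Finset.subset_union_left, ?_⟩
        intro g hg hgq1 x hx
        rcases Finset.mem_union.mp hg with h | h
        · exact absurd h hgq1
        · exact (mem_epSet.mp (hq.2 h)).2 x hx
      have hmst : G.mstFun (q.1 ∪ q.2) = q.1 := mstFun_eq hP
      have hsd : (q.1 ∪ q.2) \ q.1 = q.2 := by
        rw [Finset.union_sdiff_left]
        exact Finset.sdiff_eq_self_of_disjoint (Finset.disjoint_left.mpr hdisj)
      cases q with
      | mk T Xs =>
        simp only at hmst hsd ⊢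
        rw [hmst, hsd]
    · intro S hS
      rw [connF, Finset.mem_filter] at hS
      have hP := mstFun_spec hS.2
      simp only
      rw [Finset.union_sdiff_of_subset hP.2.1]
  rw [step1, Finset.sum_sigma]
  refine Finset.sum_congr rfl (fun T hT => ?_)
  rw [mem_treesF] at hT
  have hcardT : T.card = Fintype.card G.V - 1 := by have := hT.2; omega
  have hTle : T.card ≤ Fintype.card G.E := Finset.card_le_univ T
  have hple : G.epn T ≤ Fintype.card G.E - T.card := epn_le
  have hdisjall : ∀ X' ∈ (G.epSet T).powerset, (T ∪ X').card = T.card + X'.card := by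
    intro X' hX'
    rw [Finset.mem_powerset] at hX'
    rw [Finset.card_union_of_disjoint]
    exact Finset.disjoint_right.mpr (fun g hg => (mem_epSet.mp (hX' hg)).1)
  calc ∑ X' ∈ (G.epSet T).powerset,
        (1 - X : Polynomial ℂ) ^ (T ∪ X').card * X ^ (Fintype.card G.E - (T ∪ X').card)
      = ∑ X' ∈ (G.epSet T).powerset,
          ((1 - X : Polynomial ℂ) ^ (Fintype.card G.V - 1) *
            X ^ (Fintype.card G.E - (Fintype.card G.V - 1) - G.epn T)) *
          ((1 - X : Polynomial ℂ) ^ X'.card * X ^ (G.epn T - X'.card)) := by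
        refine Finset.sum_congr rfl (fun X' hX' => ?_)
        have hc : X'.card ≤ G.epn T :=
          Finset.card_le_card (Finset.mem_powerset.mp hX')
        rw [hdisjall X' hX', hcardT]
        have he1 : Fintype.card G.E - (Fintype.card G.V - 1 + X'.card)
            = (Fintype.card G.E - (Fintype.card G.V - 1) - G.epn T) + (G.epn T - X'.card) := by
          rw [hcardT] at hple hTle
          omega
        rw [he1, pow_add, pow_add]
        ring
    _ = _ := by
        rw [← Finset.mul_sum]
        simp only [epn]
        rw [sum_powerset_one (G.epSet T), mul_one]

end Multigraph
namespace Multigraph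

open Finset SimpleGraph

variable {G : Multigraph} [LinearOrder G.E] [Nonempty G.E]

noncomputable def gsel (G : Multigraph) [LinearOrder G.E] [Nonempty G.E]
    (T : Finset G.E) : G.E :=
  if h : (G.epSet T).Nonempty then (G.epSet T).min' h else Classical.arbitrary G.E

noncomputable def fsel (G : Multigraph) [LinearOrder G.E] [Nonempty G.E]
    (T : Finset G.E) : G.E :=
  if h : ((G.cyc T (G.gsel T)).erase (G.gsel T)).Nonempty then
    ((G.cyc T (G.gsel T)).erase (G.gsel T)).max' h
  else Classical.arbitrary G.E

noncomputable def phiT (G : Multigraph) [LinearOrder G.E] [Nonempty G.E]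
    (T : Finset G.E) : Finset G.E :=
  (insert (G.gsel T) T).erase (G.fsel T)

lemma ep1_facts (hsimple : Function.Injective G.ends) {T : Finset G.E}
    (hT : G.IsTreeSet T) (h1 : G.epn T = 1) :
    G.gsel T ∈ G.epSet T ∧ (∀ g' ∈ G.epSet T, g' = G.gsel T) ∧
      G.fsel T ∈ (G.cyc T (G.gsel T)).erase (G.gsel T) ∧
      (∀ x ∈ (G.cyc T (G.gsel T)).erase (G.gsel T), x ≤ G.fsel T) := by
  have hne : (G.epSet T).Nonempty := by
    rw [← Finset.card_pos, ← epn, h1]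
    omega
  have hg : G.gsel T ∈ G.epSet T := by
    rw [gsel, dif_pos hne]
    exact Finset.min'_mem _ _
  have huniq : ∀ g' ∈ G.epSet T, g' = G.gsel T := by
    intro g' hg'
    exact Finset.card_le_one.mp (le_of_eq h1) g' hg' _ hg
  have hgT : G.gsel T ∉ T := (mem_epSet.mp hg).1
  obtain ⟨e₁, e₂, hne12, he₁, he₂⟩ := exists_two_in_cyc hsimple hT hgT
  have hcne : ((G.cyc T (G.gsel T)).erase (G.gsel T)).Nonempty := ⟨e₁, he₁⟩
  have hf : G.fsel T ∈ (G.cyc T (G.gsel T)).erase (G.gsel T) := by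
    rw [fsel, dif_pos hcne]
    exact Finset.max'_mem _ _
  have hfmax : ∀ x ∈ (G.cyc T (G.gsel T)).erase (G.gsel T), x ≤ G.fsel T := by
    intro x hx
    rw [fsel, dif_pos hcne]
    exact Finset.le_max' _ x hx
  exact ⟨hg, huniq, hf, hfmax⟩

/-- Fundamental cycles not through the swapped pair survive a tree swap. -/
lemma delta' {T : Finset G.E} (hT : G.IsTreeSet T) {g : G.E} (hgT : g ∉ T)
    {c d : G.V} (hge : G.ends g = s(c, d))
    {f : G.E} (hfC : f ∈ G.cyc T g) (hfg : f ≠ g)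
    {h : G.E} {a b : G.V} (hhT : h ∉ T) (hhg : h ≠ g) (hhe : G.ends h = s(a, b))
    {e₀ : G.E} (he₀K : e₀ ∈ G.cyc T h) (he₀C : e₀ ∉ G.cyc T g) (he₀h : e₀ ≠ h) :
    e₀ ∈ G.cyc ((insert g T).erase f) h := by
  classical
  have tree' := isTreeSet_of_mem_cyc hT hgT hfC
  have hfT : f ∈ T := mem_cyc_of_ne hfC hfg
  obtain ⟨he₀T, he₀sep⟩ := (mem_cyc_iff hT hhT hhe he₀h).mp he₀K
  have he₀f : e₀ ≠ f := fun hh => he₀C (hh ▸ hfC)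
  have he₀g : e₀ ≠ g := fun hh => hgT (hh ▸ he₀T)
  have hgf : g ≠ f := fun hh => hfg hh.symm
  have hhT' : h ∉ (insert g T).erase f := by
    intro hmem
    rcases Finset.mem_insert.mp (Finset.mem_of_mem_erase hmem) with hh | hh
    · exact hhg hh
    · exact hhT hh
  have he₀cd : G.Rch (T.erase e₀) c d := by
    have := (mem_cyc_iff hT hgT hge he₀g).not.mp he₀C
    rw [not_and, not_not] at this
    exact this he₀T
  rw [mem_cyc_iff tree' hhT' hhe he₀h]
  refine ⟨Finset.mem_erase.mpr ⟨he₀f, Finset.mem_insert_of_mem he₀T⟩, ?_⟩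
  intro hR
  have hsetx : ((insert g T).erase f).erase e₀ = insert g ((T.erase f).erase e₀) := by
    rw [Finset.erase_insert_of_ne hgf, Finset.erase_insert_of_ne (fun hh => he₀g hh.symm)]
  rw [hsetx] at hR
  have hgW : g ∉ (T.erase f).erase e₀ :=
    fun hh => hgT (Finset.mem_of_mem_erase (Finset.mem_of_mem_erase hh))
  have hWsub : (T.erase f).erase e₀ ⊆ T.erase e₀ :=
    Finset.erase_subset_erase e₀ (Finset.erase_subset f T)
  have hEW : (insert g ((T.erase f).erase e₀)).erase g = (T.erase f).erase e₀ :=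
    Finset.erase_insert hgW
  rcases rch_decomp hge hR with h1 | ⟨h1, h2⟩ | ⟨h1, h2⟩
  · rw [hEW] at h1
    exact he₀sep (rch_mono hWsub h1)
  · rw [hEW] at h1 h2
    have hacd : G.Rch (T.erase e₀) a b :=
      ((rch_mono hWsub h1).trans he₀cd).trans (rch_mono hWsub h2)
    exact he₀sep hacd
  · rw [hEW] at h1 h2
    have hacd : G.Rch (T.erase e₀) a b :=
      ((rch_mono hWsub h1).trans he₀cd.symm).trans (rch_mono hWsub h2)
    exact he₀sep hacd

lemma phiT_trees0 (hsimple : Function.Injective G.ends) {T : Finset G.E}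
    (hT : G.IsTreeSet T) (h1 : G.epn T = 1) :
    G.IsTreeSet (G.phiT T) ∧ G.epn (G.phiT T) = 0 := by
  classical
  obtain ⟨hg, huniq, hf, hfmax⟩ := ep1_facts hsimple hT h1
  set g := G.gsel T with hgdef
  set f := G.fsel T with hfdef
  have hact : ∀ x ∈ G.cyc T g, x ≤ g := (mem_epSet.mp hg).2
  have hgT : g ∉ T := (mem_epSet.mp hg).1
  have hfg : f ≠ g := (Finset.mem_erase.mp hf).1
  have hfC : f ∈ G.cyc T g := (Finset.mem_erase.mp hf).2
  have hfT : f ∈ T := mem_cyc_of_ne hfC hfg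
  have hflt : f < g := lt_of_le_of_ne (hact f hfC) hfg
  have hgf : g ≠ f := fun hh => hfg hh.symm
  have tree' : G.IsTreeSet (G.phiT T) := isTreeSet_of_mem_cyc hT hgT hfC
  refine ⟨tree', ?_⟩
  rw [epn, Finset.card_eq_zero, Finset.eq_empty_iff_forall_notMem]
  intro h hmem
  obtain ⟨hhT', hact'⟩ := mem_epSet.mp hmem
  obtain ⟨c, d, hcd, hge⟩ := exists_ends G g
  have hgT' : g ∈ G.phiT T :=
    Finset.mem_erase.mpr ⟨hgf, Finset.mem_insert_self _ _⟩
  have hhg : h ≠ g := fun hh => hhT' (hh ▸ hgT')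
  by_cases hhf : h = f
  · subst hhf
    have hIns : insert f (G.phiT T) = insert g T := by
      rw [phiT, ← hfdef, ← hgdef, Finset.insert_erase (Finset.mem_insert_of_mem hfT)]
    have hcyc' : G.cyc (G.phiT T) f = G.cyc T g := by
      rw [cyc, cyc, hIns]
    have hgle : g ≤ f := hact' g (by
      rw [hcyc']
      exact self_mem_cyc hgT hT.1)
    exact absurd hgle (not_le.mpr hflt)
  · have hhT : h ∉ T := by
      intro hmem2
      exact hhT' (Finset.mem_erase.mpr ⟨hhf, Finset.mem_insert_of_mem hmem2⟩)
    have hnot : ¬ (h ∉ T ∧ ∀ x ∈ G.cyc T h, x ≤ h) :=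
      fun hc => hhg (huniq h (mem_epSet.mpr hc))
    push_neg at hnot
    obtain ⟨e₀, he₀K, he₀h⟩ := hnot hhT
    obtain ⟨a, b, hab, hhe⟩ := exists_ends G h
    obtain ⟨he₀T, he₀sep⟩ := (mem_cyc_iff hT hhT hhe (ne_of_gt he₀h)).mp he₀K
    by_cases he₀C : e₀ ∈ G.cyc T g
    · have he₀g : e₀ ≤ g := hact e₀ he₀C
      by_cases hgK' : g ∈ G.cyc (G.phiT T) h
      · have hgleh : g ≤ h := hact' g hgK'
        have : h < h := lt_of_lt_of_le he₀h (le_trans he₀g hgleh)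
        exact absurd this (lt_irrefl h)
      · have hgne_h : g ≠ h := fun hh => hhg hh.symm
        have hRT'g : G.Rch ((G.phiT T).erase g) a b := by
          have hnotmem := (mem_cyc_iff tree' hhT' hhe hgne_h).not.mp hgK'
          rw [not_and, not_not] at hnotmem
          exact hnotmem hgT'
        have hsetg : (G.phiT T).erase g = T.erase f := by
          ext z
          simp only [phiT, ← hfdef, ← hgdef, Finset.mem_erase, Finset.mem_insert]
          constructor
          · rintro ⟨hzg, hzf, (rfl | hzT)⟩
            · exact absurd rfl hzg
            · exact ⟨hzf, hzT⟩
          · rintro ⟨hzf, hzT⟩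
            exact ⟨fun hh => hgT (hh ▸ hzT), hzf, Or.inr hzT⟩
        have hRfab : G.Rch (T.erase f) a b := by rw [← hsetg]; exact hRT'g
        by_cases he₀f : e₀ = f
        · rw [he₀f] at he₀sep
          exact he₀sep hRfab
        · have he₀T' : e₀ ∈ G.phiT T := by
            rw [phiT, ← hfdef, ← hgdef]
            exact Finset.mem_erase.mpr ⟨he₀f, Finset.mem_insert_of_mem he₀T⟩
          have he₀gne : e₀ ≠ g := fun hh => hgT (hh ▸ he₀T)
          have he₀K' : e₀ ∈ G.cyc (G.phiT T) h := by
            rw [mem_cyc_iff tree' hhT' hhe (ne_of_gt he₀h)]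
            refine ⟨he₀T', ?_⟩
            intro hR
            have hsetx : (G.phiT T).erase e₀ = insert g ((T.erase f).erase e₀) := by
              rw [phiT, ← hfdef, ← hgdef, Finset.erase_insert_of_ne hgf,
                Finset.erase_insert_of_ne (fun hh => he₀gne hh.symm)]
            rw [hsetx] at hR
            have hgW : g ∉ (T.erase f).erase e₀ :=
              fun hh => hgT (Finset.mem_of_mem_erase (Finset.mem_of_mem_erase hh))
            have hEW := Finset.erase_insert hgW
            have hWf : (T.erase f).erase e₀ ⊆ T.erase f := Finset.erase_subset _ _
            have hfsep : ¬ G.Rch (T.erase f) c d := ((mem_cyc_iff hT hgT hge hfg).mp hfC).2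
            rcases rch_decomp hge hR with h1x | ⟨h1x, h2x⟩ | ⟨h1x, h2x⟩
            · rw [hEW] at h1x
              exact he₀sep
                (rch_mono (Finset.erase_subset_erase e₀ (Finset.erase_subset f T)) h1x)
            · rw [hEW] at h1x h2x
              exact hfsep (((rch_mono hWf h1x).symm.trans hRfab).trans (rch_mono hWf h2x).symm)
            · rw [hEW] at h1x h2x
              exact hfsep (((rch_mono hWf h2x).trans hRfab.symm).trans (rch_mono hWf h1x))
          exact absurd (hact' e₀ he₀K') (not_le.mpr he₀h)
    · have := delta' hT hgT hge hfC hfg hhT hhg hhe he₀K he₀C (ne_of_gt he₀h)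
      exact absurd (hact' e₀ this) (not_le.mpr he₀h)

end Multigraph
namespace Multigraph

open Finset SimpleGraph

variable {G : Multigraph} [LinearOrder G.E] [Nonempty G.E]

lemma phiT_recover (hsimple : Function.Injective G.ends) {T T₀ : Finset G.E}
    (hT : G.IsTreeSet T) (h1 : G.epn T = 1) (hp : G.phiT T = T₀) :
    T = (insert (G.fsel T) T₀).erase (G.gsel T) := by
  obtain ⟨hg, _, hf, _⟩ := ep1_facts hsimple hT h1
  have hgT : G.gsel T ∉ T := (mem_epSet.mp hg).1
  have hfg : G.fsel T ≠ G.gsel T := (Finset.mem_erase.mp hf).1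
  have hfT : G.fsel T ∈ T := mem_cyc_of_ne (Finset.mem_erase.mp hf).2 hfg
  rw [← hp, phiT, Finset.insert_erase (Finset.mem_insert_of_mem hfT),
    Finset.erase_insert hgT]

lemma phiT_inj_aux (hsimple : Function.Injective G.ends) {T₀ Ta Tb : Finset G.E}
    (hT₀ : G.IsTreeSet T₀)
    (hTa : G.IsTreeSet Ta) (ha : G.epn Ta = 1)
    (hTb : G.IsTreeSet Tb) (hb : G.epn Tb = 1)
    (hpa : G.phiT Ta = T₀) (hpb : G.phiT Tb = T₀)
    (hgeq : G.gsel Ta = G.gsel Tb) (hflt : G.fsel Ta < G.fsel Tb) : False := by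
  classical
  obtain ⟨hga, huniqa, hfa, hfamax⟩ := ep1_facts hsimple hTa ha
  obtain ⟨hgb, huniqb, hfb, hfbmax⟩ := ep1_facts hsimple hTb hb
  have hra := phiT_recover hsimple hTa ha hpa
  have hrb := phiT_recover hsimple hTb hb hpb
  rw [phiT] at hpa hpb
  rw [← hgeq] at hgb huniqb hfb hfbmax hpb hrb
  set g := G.gsel Ta with hgdef
  set f₁ := G.fsel Ta with hf1def
  set f₂ := G.fsel Tb with hf2def
  have hacta : ∀ x ∈ G.cyc Ta g, x ≤ g := (mem_epSet.mp hga).2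
  have hactb : ∀ x ∈ G.cyc Tb g, x ≤ g := (mem_epSet.mp hgb).2
  have hgTa : g ∉ Ta := (mem_epSet.mp hga).1
  have hgTb : g ∉ Tb := (mem_epSet.mp hgb).1
  have hf₁g : f₁ ≠ g := (Finset.mem_erase.mp hfa).1
  have hf₂g : f₂ ≠ g := (Finset.mem_erase.mp hfb).1
  have hf₁C : f₁ ∈ G.cyc Ta g := (Finset.mem_erase.mp hfa).2
  have hf₂C : f₂ ∈ G.cyc Tb g := (Finset.mem_erase.mp hfb).2
  have hf₁Ta : f₁ ∈ Ta := mem_cyc_of_ne hf₁C hf₁g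
  have hf₂Tb : f₂ ∈ Tb := mem_cyc_of_ne hf₂C hf₂g
  have hIb : insert f₂ T₀ = insert g Tb := by
    rw [← hpb, Finset.insert_erase (Finset.mem_insert_of_mem hf₂Tb)]
  have hgT₀ : g ∈ T₀ := by
    rw [← hpa]
    exact Finset.mem_erase.mpr ⟨fun hh => hf₁g hh.symm, Finset.mem_insert_self _ _⟩
  have hf₂T₀ : f₂ ∉ T₀ := by
    rw [← hpb]
    exact Finset.notMem_erase _ _
  have hf₂Ta : f₂ ∉ Ta := by
    rw [hra]
    intro hmem
    rcases Finset.mem_insert.mp (Finset.mem_of_mem_erase hmem) with hh | hh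
    · exact absurd hh (ne_of_gt hflt)
    · exact hf₂T₀ hh
  have hCb : G.cyc T₀ f₂ = G.cyc Tb g := by rw [cyc, cyc, hIb]
  have hep : f₂ ∈ G.epSet Ta := by
    rw [mem_epSet]
    refine ⟨hf₂Ta, ?_⟩
    intro x hx
    by_cases hxf₂ : x = f₂
    · exact le_of_eq hxf₂
    obtain ⟨a, b, hab, hf₂e⟩ := exists_ends G f₂
    obtain ⟨hxTa, hxsep⟩ := (mem_cyc_iff hTa hf₂Ta hf₂e hxf₂).mp hx
    have hxg : x ≠ g := fun hh => hgTa (hh ▸ hxTa)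
    by_cases hxC₂ : x ∈ G.cyc Tb g
    · exact hfbmax x (Finset.mem_erase.mpr ⟨hxg, hxC₂⟩)
    by_cases hxC₁ : x ∈ G.cyc Ta g
    · exact le_trans (hfamax x (Finset.mem_erase.mpr ⟨hxg, hxC₁⟩)) (le_of_lt hflt)
    exfalso
    have hxf₁ : x ≠ f₁ := fun hh => hxC₁ (hh ▸ hf₁C)
    have hxT₀ : x ∈ T₀ := by
      rw [hra] at hxTa
      rcases Finset.mem_insert.mp (Finset.mem_of_mem_erase hxTa) with hh | hh
      · exact absurd hh hxf₁
      · exact hh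
    have hxC₀ : x ∉ G.cyc T₀ f₂ := by rw [hCb]; exact hxC₂
    have hx0 : G.Rch (T₀.erase x) a b := by
      have hthis := (mem_cyc_iff hT₀ hf₂T₀ hf₂e hxf₂).not.mp hxC₀
      rw [not_and, not_not] at hthis
      exact hthis hxT₀
    obtain ⟨c, d, hcd, hge⟩ := exists_ends G g
    have hgf₁ : g ≠ f₁ := fun hh => hf₁g hh.symm
    have hsetx : T₀.erase x = insert g ((Ta.erase f₁).erase x) := by
      rw [← hpa, Finset.erase_insert_of_ne hgf₁,
        Finset.erase_insert_of_ne (fun hh => hxg hh.symm)]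
    rw [hsetx] at hx0
    have hgW : g ∉ (Ta.erase f₁).erase x :=
      fun hh => hgTa (Finset.mem_of_mem_erase (Finset.mem_of_mem_erase hh))
    have hEW := Finset.erase_insert hgW
    have hWsub : (Ta.erase f₁).erase x ⊆ Ta.erase x :=
      Finset.erase_subset_erase x (Finset.erase_subset f₁ Ta)
    have hxcd : G.Rch (Ta.erase x) c d := by
      have hthis := (mem_cyc_iff hTa hgTa hge hxg).not.mp hxC₁
      rw [not_and, not_not] at hthis
      exact hthis hxTa
    rcases rch_decomp hge hx0 with h1x | ⟨h1x, h2x⟩ | ⟨h1x, h2x⟩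
    · rw [hEW] at h1x
      exact hxsep (rch_mono hWsub h1x)
    · rw [hEW] at h1x h2x
      exact hxsep (((rch_mono hWsub h1x).trans hxcd).trans (rch_mono hWsub h2x))
    · rw [hEW] at h1x h2x
      exact hxsep (((rch_mono hWsub h1x).trans hxcd.symm).trans (rch_mono hWsub h2x))
  have hfinal : f₂ = g := huniqa f₂ hep
  exact hgTb (hfinal ▸ hf₂Tb)

lemma phiT_inj (hsimple : Function.Injective G.ends) {T₀ Ta Tb : Finset G.E}
    (hT₀ : G.IsTreeSet T₀)
    (hTa : G.IsTreeSet Ta) (ha : G.epn Ta = 1)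
    (hTb : G.IsTreeSet Tb) (hb : G.epn Tb = 1)
    (hpa : G.phiT Ta = T₀) (hpb : G.phiT Tb = T₀)
    (hgeq : G.gsel Ta = G.gsel Tb) : Ta = Tb := by
  rcases lt_trichotomy (G.fsel Ta) (G.fsel Tb) with hlt | heq | hlt
  · exact absurd (phiT_inj_aux hsimple hT₀ hTa ha hTb hb hpa hpb hgeq hlt) id
  · rw [phiT_recover hsimple hTa ha hpa, phiT_recover hsimple hTb hb hpb, heq, hgeq]
  · exact absurd (phiT_inj_aux hsimple hT₀ hTb hb hTa ha hpb hpa hgeq.symm hlt) id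

lemma card_trees1_le (hsimple : Function.Injective G.ends)
    (hn : 3 ≤ Fintype.card G.V) :
    (G.treesF.filter (fun T => G.epn T = 1)).card ≤
      (Fintype.card G.V - 2) * (G.treesF.filter (fun T => G.epn T = 0)).card := by
  classical
  have hmap : ∀ T ∈ G.treesF.filter (fun T => G.epn T = 1),
      G.phiT T ∈ G.treesF.filter (fun T => G.epn T = 0) := by
    intro T hTmem
    rw [Finset.mem_filter, mem_treesF] at hTmem
    obtain ⟨h0, h1⟩ := phiT_trees0 hsimple hTmem.1 hTmem.2
    exact Finset.mem_filter.mpr ⟨mem_treesF.mpr h0, h1⟩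
  rw [Finset.card_eq_sum_card_fiberwise hmap]
  have hbound : ∀ T₀ ∈ G.treesF.filter (fun T => G.epn T = 0),
      ((G.treesF.filter (fun T => G.epn T = 1)).filter (fun T => G.phiT T = T₀)).card ≤
        Fintype.card G.V - 2 := by
    intro T₀ hT₀mem
    rw [Finset.mem_filter, mem_treesF] at hT₀mem
    obtain ⟨hT₀tree, hT₀ep⟩ := hT₀mem
    have hT₀card : T₀.card + 1 = Fintype.card G.V := hT₀tree.2
    have hT₀ne : T₀.Nonempty := Finset.card_pos.mp (by omega)
    have hstep : ((G.treesF.filter (fun T => G.epn T = 1)).filter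
        (fun T => G.phiT T = T₀)).card ≤ (T₀.erase (T₀.min' hT₀ne)).card := by
      apply Finset.card_le_card_of_injOn (fun T => G.gsel T)
      · intro T hTf
        rw [Finset.mem_coe, Finset.mem_filter] at hTf
        obtain ⟨hT1mem, hphiT⟩ := hTf
        rw [Finset.mem_filter, mem_treesF] at hT1mem
        obtain ⟨hTtree, hTep⟩ := hT1mem
        obtain ⟨hg, huniq, hf, hfmax⟩ := ep1_facts hsimple hTtree hTep
        have hgT : G.gsel T ∉ T := (mem_epSet.mp hg).1
        have hact : ∀ x ∈ G.cyc T (G.gsel T), x ≤ G.gsel T := (mem_epSet.mp hg).2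
        have hfg := (Finset.mem_erase.mp hf).1
        have hgmem : G.gsel T ∈ T₀ := by
          rw [← hphiT, phiT]
          exact Finset.mem_erase.mpr ⟨fun hh => hfg hh.symm, Finset.mem_insert_self _ _⟩
        obtain ⟨e₁, e₂, hne12, he₁, he₂⟩ := exists_two_in_cyc hsimple hTtree hgT
        have hpick : ∃ x, x ∈ (G.cyc T (G.gsel T)).erase (G.gsel T) ∧ x ≠ G.fsel T := by
          by_cases hca : e₁ = G.fsel T
          · refine ⟨e₂, he₂, fun hh => hne12 ?_⟩
            rw [hca, hh]
          · exact ⟨e₁, he₁, hca⟩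
        obtain ⟨x, hxmem, hxf⟩ := hpick
        have hxg : x ≠ G.gsel T := (Finset.mem_erase.mp hxmem).1
        have hxT : x ∈ T := mem_cyc_of_ne (Finset.mem_erase.mp hxmem).2 hxg
        have hxT₀ : x ∈ T₀ := by
          rw [← hphiT, phiT]
          exact Finset.mem_erase.mpr ⟨hxf, Finset.mem_insert_of_mem hxT⟩
        have hxlt : x < G.gsel T :=
          lt_of_le_of_ne (hact x (Finset.mem_erase.mp hxmem).2) hxg
        refine Finset.mem_erase.mpr ⟨?_, hgmem⟩
        intro hh
        have hminle := Finset.min'_le T₀ x hxT₀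
        rw [show G.gsel T = _ from hh] at hxlt
        exact absurd hminle (not_le.mpr hxlt)
      · intro Ta hTamem Tb hTbmem hgeq2
        have hTa' := Finset.mem_coe.mp hTamem
        have hTb' := Finset.mem_coe.mp hTbmem
        rw [Finset.mem_filter] at hTa' hTb'
        obtain ⟨hTa1, hpa⟩ := hTa'
        obtain ⟨hTb1, hpb⟩ := hTb'
        rw [Finset.mem_filter, mem_treesF] at hTa1 hTb1
        exact phiT_inj hsimple hT₀tree hTa1.1 hTa1.2 hTb1.1 hTb1.2 hpa hpb hgeq2
    have hcarde : (T₀.erase (T₀.min' hT₀ne)).card = Fintype.card G.V - 2 := by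
      rw [Finset.card_erase_of_mem (Finset.min'_mem _ _)]
      omega
    omega
  calc ∑ T₀ ∈ G.treesF.filter (fun T => G.epn T = 0),
        ((G.treesF.filter (fun T => G.epn T = 1)).filter (fun T => G.phiT T = T₀)).card
      ≤ ∑ _T₀ ∈ G.treesF.filter (fun T => G.epn T = 0), (Fintype.card G.V - 2) :=
        Finset.sum_le_sum hbound
    _ = (Fintype.card G.V - 2) * (G.treesF.filter (fun T => G.epn T = 0)).card := by
        rw [Finset.sum_const, smul_eq_mul, Nat.mul_comm]

end Multigraph
namespace Multigraph

open Finset SimpleGraph Polynomial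

theorem hvector_ratio_le' (G : Multigraph) (hG : G.Connected)
    (hsimple : Function.Injective G.ends)
    (hn : 3 ≤ Fintype.card G.V) (hm : Fintype.card G.V ≤ Fintype.card G.E)
    (H : ℕ → ℝ)
    (hH : G.Rel = (1 - X) ^ (Fintype.card G.V - 1) *
      ∑ k ∈ Finset.range (Fintype.card G.E - Fintype.card G.V + 2), C (H k : ℂ) * X ^ k) :
    H (Fintype.card G.E - Fintype.card G.V) ≤
      ((Fintype.card G.V : ℝ) - 2) * H (Fintype.card G.E - Fintype.card G.V + 1) := by
  classical
  letI : LinearOrder G.E := LinearOrder.lift' (Fintype.equivFin G.E) (Equiv.injective _)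
  haveI hEne : Nonempty G.E := by
    rw [← Fintype.card_pos_iff]
    omega
  set n := Fintype.card G.V with hndef
  set m := Fintype.card G.E with hmdef
  have hrel := rel_eq_trees (G := G)
  have hpow : ((1 : Polynomial ℂ) - X) ^ (n - 1) ≠ 0 := by
    apply pow_ne_zero
    intro hzero
    have hco := congrArg (fun p => Polynomial.coeff p 0) hzero
    simp at hco
  have hkey : (∑ k ∈ Finset.range (m - n + 2), Polynomial.C ((H k : ℝ) : ℂ) * X ^ k)
      = ∑ T ∈ G.treesF, (X : Polynomial ℂ) ^ (m - (n - 1) - G.epn T) := by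
    apply mul_left_cancel₀ hpow
    rw [← hH, hrel, Finset.mul_sum]
  have hcoeff : ∀ k₀, k₀ < m - n + 2 →
      ((H k₀ : ℝ) : ℂ) =
        (((G.treesF.filter (fun T => k₀ = m - (n - 1) - G.epn T)).card : ℕ) : ℂ) := by
    intro k₀ hk₀
    have h1 := congrArg (fun p => Polynomial.coeff p k₀) hkey
    simp only [Polynomial.finset_sum_coeff] at h1
    have hL : (∑ k ∈ Finset.range (m - n + 2),
        (Polynomial.C ((H k : ℝ) : ℂ) * X ^ k).coeff k₀) = ((H k₀ : ℝ) : ℂ) := by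
      rw [Finset.sum_congr rfl (fun k _ => by
        rw [Polynomial.coeff_C_mul, Polynomial.coeff_X_pow, mul_ite, mul_one, mul_zero])]
      rw [Finset.sum_ite_eq (Finset.range (m - n + 2)) k₀ (fun k => ((H k : ℝ) : ℂ))]
      rw [if_pos (Finset.mem_range.mpr hk₀)]
    have hR : (∑ T ∈ G.treesF, ((X : Polynomial ℂ) ^ (m - (n - 1) - G.epn T)).coeff k₀)
        = (((G.treesF.filter (fun T => k₀ = m - (n - 1) - G.epn T)).card : ℕ) : ℂ) := by
      rw [Finset.sum_congr rfl (fun T _ => Polynomial.coeff_X_pow _ _)]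
      rw [Finset.sum_boole]
    rw [hL, hR] at h1
    exact h1
  have hfilter0 : G.treesF.filter (fun T => m - n + 1 = m - (n - 1) - G.epn T)
      = G.treesF.filter (fun T => G.epn T = 0) := by
    apply Finset.filter_congr
    intro T hT
    rw [mem_treesF] at hT
    have h1 : T.card + 1 = n := hT.2
    have h2 : G.epn T ≤ m - T.card := epn_le
    have h3 : T.card ≤ m := Finset.card_le_univ T
    omega
  have hfilter1 : G.treesF.filter (fun T => m - n = m - (n - 1) - G.epn T)
      = G.treesF.filter (fun T => G.epn T = 1) := by
    apply Finset.filter_congr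
    intro T hT
    rw [mem_treesF] at hT
    have h1 : T.card + 1 = n := hT.2
    have h2 : G.epn T ≤ m - T.card := epn_le
    have h3 : T.card ≤ m := Finset.card_le_univ T
    omega
  have hc0 := hcoeff (m - n + 1) (by omega)
  have hc1 := hcoeff (m - n) (by omega)
  rw [hfilter0] at hc0
  rw [hfilter1] at hc1
  have hr0 : H (m - n + 1) = ((G.treesF.filter (fun T => G.epn T = 0)).card : ℝ) := by
    exact_mod_cast hc0
  have hr1 : H (m - n) = ((G.treesF.filter (fun T => G.epn T = 1)).card : ℝ) := by
    exact_mod_cast hc1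
  have hineq := G.card_trees1_le hsimple hn
  rw [hr0, hr1]
  have hcast : ((n : ℝ) - 2) = (((n - 2 : ℕ) : ℕ) : ℝ) := by
    push_cast [Nat.cast_sub (by omega : 2 ≤ n)]
    ring
  rw [hcast]
  exact_mod_cast hineq

end Multigraph

namespace Multigraph

/-- If `G` is a connected simple graph with `n ≥ 3` vertices and
`m ≥ n` edges, then the H-vector of the cographic matroid of `G` (defined by the
identity `Rel(G;q) = (1-q)^{n-1} Σ_{k=0}^{m-n+1} H_k q^k`) satisfies
`H_{m-n} ≤ (n-2)·H_{m-n+1}`. -/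
theorem hvector_ratio_le (G : Multigraph) (hG : G.Connected)
    (hsimple : Function.Injective G.ends)
    (hn : 3 ≤ Fintype.card G.V) (hm : Fintype.card G.V ≤ Fintype.card G.E)
    (H : ℕ → ℝ)
    (hH : G.Rel = (1 - X) ^ (Fintype.card G.V - 1) *
      ∑ k ∈ Finset.range (Fintype.card G.E - Fintype.card G.V + 2), C (H k : ℂ) * X ^ k) :
    H (Fintype.card G.E - Fintype.card G.V) ≤
      ((Fintype.card G.V : ℝ) - 2) * H (Fintype.card G.E - Fintype.card G.V + 1) := by
  exact hvector_ratio_le' G hG hsimple hn hm H hH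

end Multigraph
end

section
/- Let m, n, a, b be positive integers. Then, as an identity of polynomials in q, Σ_{i=1}^{m} Σ_{j=0}^{n} C(m−1, i−1) · C(n, j) · q^{a[i(m−i)+j(n−j)] + b[i(n−j)+j(m−i)]} · Rel(G_{i,j}^{a,b}; q) = 1, where Rel(G_{1,0}^{a,b}; q) = 1 (the single-vertex graph) and C(·,·) denotes a binomial coefficient. -/
open Polynomial

namespace RelProof
open Multigraph

lemma walk_transfer {V : Type} {H H' : SimpleGraph V} {K : Set V}
    (hK : ∀ x y, x ∈ K → H.Adj x y → y ∈ K ∧ H'.Adj x y) :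
    ∀ {u w : V}, H.Walk u w → u ∈ K → w ∈ K ∧ H'.Reachable u w := by
  intro u w p
  induction p with
  | nil => exact fun hu => ⟨hu, SimpleGraph.Reachable.refl _⟩
  | cons hadj p ih =>
      intro hu
      obtain ⟨hx, hadj'⟩ := hK _ _ hu hadj
      obtain ⟨hw, hr⟩ := ih hx
      exact ⟨hw, hadj'.reachable.trans hr⟩

lemma reachable_transfer {V : Type} {H H' : SimpleGraph V} {K : Set V}
    (hK : ∀ x y, x ∈ K → H.Adj x y → y ∈ K ∧ H'.Adj x y)
    {u w : V} (h : H.Reachable u w) (hu : u ∈ K) : w ∈ K ∧ H'.Reachable u w := by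
  obtain ⟨p⟩ := h
  exact walk_transfer hK p hu

lemma sum_weights (α : Type) [Fintype α] [DecidableEq α] :
    ∑ S : Finset α, (1 - X : ℂ[X]) ^ S.card * X ^ (Fintype.card α - S.card) = 1 := by
  have h := Finset.prod_add (fun _ : α => (1 - X : ℂ[X])) (fun _ => X) Finset.univ
  simp only [sub_add_cancel, Finset.prod_const, one_pow, Finset.powerset_univ,
    Finset.card_univ_diff] at h
  exact h.symm

lemma reachable_map_iff {α β : Type} {ι : α → β} (hinj : Function.Injective ι)
    {H : SimpleGraph α} {H' : SimpleGraph β}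
    (hAdj : ∀ p q, H.Adj p q ↔ H'.Adj (ι p) (ι q))
    (hR : ∀ x y, x ∈ Set.range ι → H'.Adj x y → y ∈ Set.range ι)
    (p q : α) : H.Reachable p q ↔ H'.Reachable (ι p) (ι q) := by
  constructor
  · rintro ⟨w⟩
    induction w with
    | nil => exact SimpleGraph.Reachable.refl _
    | cons h w ih => exact ((hAdj _ _).1 h).reachable.trans ih
  · have main : ∀ {x y : β}, H'.Walk x y → ∀ p : α, ι p = x →
        ∃ q : α, ι q = y ∧ H.Reachable p q := by
      intro x y w
      induction w with
      | nil => exact fun p hp => ⟨p, hp, SimpleGraph.Reachable.refl _⟩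
      | @cons x v y hadj w ih =>
          intro p hp
          have hv : v ∈ Set.range ι := hR x v ⟨p, hp⟩ hadj
          obtain ⟨r, hr⟩ := hv
          obtain ⟨q, hq, hreach⟩ := ih r hr
          refine ⟨q, hq, SimpleGraph.Reachable.trans ?_ hreach⟩
          refine ((hAdj p r).2 ?_).reachable
          rw [hp, hr]; exact hadj
    rintro ⟨w⟩
    obtain ⟨q', hq', hreach⟩ := main w p rfl
    rwa [hinj hq'] at hreach

lemma sym2_exists {α : Type*} (p : Sym2 α) : ∃ x y, p = s(x, y) :=
  Sym2.inductionOn p fun x y => ⟨x, y, rfl⟩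

section General
open scoped Classical

variable (G : _root_.Multigraph)

def eIn (K : Finset G.V) (e : G.E) : Prop := ∀ x ∈ G.ends e, x ∈ K
def eOut (K : Finset G.V) (e : G.E) : Prop := ∀ x ∈ G.ends e, x ∉ K
def eCross (K : Finset G.V) (e : G.E) : Prop := ¬ eIn G K e ∧ ¬ eOut G K e

lemma not_eIn_eOut (K : Finset G.V) (e : G.E) : ¬ (eIn G K e ∧ eOut G K e) := by
  rintro ⟨h1, h2⟩
  obtain ⟨x, y, hxy⟩ := sym2_exists (G.ends e)
  have hx : x ∈ G.ends e := by rw [hxy]; simp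
  exact h2 x hx (h1 x hx)

lemma card_edge_split (K : Finset G.V) :
    Fintype.card G.E = Fintype.card {e // eIn G K e} + Fintype.card {e // eOut G K e} +
      Fintype.card {e // eCross G K e} := by
  rw [Fintype.card_subtype, Fintype.card_subtype, Fintype.card_subtype]
  have h1 := Finset.card_filter_add_card_filter_not
    (s := (Finset.univ : Finset G.E)) (p := eIn G K)
  have h2 := Finset.card_filter_add_card_filter_not
    (s := (Finset.univ.filter (fun e => ¬ eIn G K e))) (p := eOut G K)
  rw [Finset.filter_filter, Finset.filter_filter] at h2
  have e1 : Finset.univ.filter (fun e => ¬ eIn G K e ∧ eOut G K e)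
      = Finset.univ.filter (eOut G K) := by
    apply Finset.filter_congr
    intro e _
    constructor
    · exact fun h => h.2
    · exact fun h => ⟨fun h' => not_eIn_eOut G K e ⟨h', h⟩, h⟩
  have e2 : Finset.univ.filter (fun e => ¬ eIn G K e ∧ ¬ eOut G K e)
      = Finset.univ.filter (eCross G K) :=
    Finset.filter_congr (fun x _ => Iff.rfl)
  rw [e1, e2] at h2
  rw [Finset.card_univ] at h1
  have e3 : (Finset.univ.filter (eIn G K)).card
      = (Finset.univ.filter (fun x => eIn G K x)).card := by
    congr 1
  have e4 : (Finset.univ.filter (eOut G K)).card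
      = (Finset.univ.filter (fun x => eOut G K x)).card := by
    congr 1
  have e5 : (Finset.univ.filter (eCross G K)).card
      = (Finset.univ.filter (fun x => eCross G K x)).card := by
    congr 1
  omega

noncomputable def compF (v0 : G.V) (S : Finset G.E) : Finset G.V :=
  Finset.univ.filter fun w => (G.spanningGraph ↑S).Reachable v0 w

def connA (v0 : G.V) (K : Finset G.V) (S1 : Finset {e // eIn G K e}) : Prop :=
  ∀ w ∈ K, (G.spanningGraph ↑(S1.map (Function.Embedding.subtype _))).Reachable v0 w

lemma adj_step (K : Finset G.V) (S : Finset G.E)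
    (hS : ∀ e ∈ S, eIn G K e ∨ eOut G K e) {x y : G.V} (hx : x ∈ K)
    (h : (G.spanningGraph ↑S).Adj x y) :
    y ∈ K ∧ (G.spanningGraph ↑(S.filter (eIn G K))).Adj x y := by
  obtain ⟨hxy, e, he, hends⟩ := h
  have heS : e ∈ S := he
  rcases hS e heS with hin | hout
  · have hy : y ∈ K := hin y (by rw [hends]; simp)
    exact ⟨hy, hxy, e, by simp [Finset.mem_coe, Finset.mem_filter, heS, hin], hends⟩
  · exact absurd hx (hout x (by rw [hends]; simp))

lemma spanningGraph_mono {S T : Set G.E} (h : S ⊆ T) :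
    G.spanningGraph S ≤ G.spanningGraph T := by
  rintro x y ⟨hxy, e, he, hends⟩
  exact ⟨hxy, e, h he, hends⟩

lemma compF_eq_iff (v0 : G.V) (K : Finset G.V) (hv0 : v0 ∈ K) (S : Finset G.E) :
    compF G v0 S = K ↔ ((∀ e ∈ S, eIn G K e ∨ eOut G K e) ∧
      ∀ w ∈ K, (G.spanningGraph ↑(S.filter (eIn G K))).Reachable v0 w) := by
  constructor
  · intro hK
    have hmem : ∀ w, w ∈ K ↔ (G.spanningGraph ↑S).Reachable v0 w := by
      intro w; rw [← hK]; simp [compF]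
    have hS : ∀ e ∈ S, eIn G K e ∨ eOut G K e := by
      intro e he
      obtain ⟨x, y, hxy⟩ := sym2_exists (G.ends e)
      have hne : x ≠ y := by
        have := G.loopless e
        rw [hxy, Sym2.mk_isDiag_iff] at this
        exact this
      have hadjxy : (G.spanningGraph ↑S).Adj x y := ⟨hne, e, he, hxy⟩
      by_cases hx : x ∈ K <;> by_cases hy : y ∈ K
      · left; intro z hz; rw [hxy, Sym2.mem_iff] at hz
        rcases hz with rfl | rfl <;> assumption
      · exfalso; apply hy; rw [hmem y]
        exact ((hmem x).1 hx).trans hadjxy.reachable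
      · exfalso; apply hx; rw [hmem x]
        exact ((hmem y).1 hy).trans hadjxy.symm.reachable
      · right; intro z hz; rw [hxy, Sym2.mem_iff] at hz
        rcases hz with rfl | rfl <;> assumption
    refine ⟨hS, ?_⟩
    intro w hw
    exact (reachable_transfer (K := (↑K : Set G.V))
      (fun x y hx h => adj_step G K S hS hx h) ((hmem w).1 hw) hv0).2
  · rintro ⟨hS, hconn⟩
    ext w
    simp only [compF, Finset.mem_filter, Finset.mem_univ, true_and]
    constructor
    · intro hr
      exact (reachable_transfer (K := (↑K : Set G.V))
        (fun x y hx h => adj_step G K S hS hx h) hr hv0).1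
    · intro hw
      exact (hconn w hw).mono (spanningGraph_mono G (by
        intro e he
        simp only [Finset.coe_filter, Set.mem_setOf_eq] at he
        exact he.1))


lemma glue_filter_eIn (K : Finset G.V)
    (P : Finset {e // eIn G K e} × Finset {e // eOut G K e}) :
    (P.1.map (Function.Embedding.subtype _) ∪ P.2.map (Function.Embedding.subtype _)).filter
        (eIn G K) = P.1.map (Function.Embedding.subtype _) := by
  ext e
  simp only [Finset.mem_filter, Finset.mem_union, Finset.mem_map,
    Function.Embedding.coe_subtype]
  constructor
  · rintro ⟨h1 | h2, hin⟩
    · exact h1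
    · exfalso
      obtain ⟨b, _, rfl⟩ := h2
      exact not_eIn_eOut G K b ⟨hin, b.2⟩
  · rintro ⟨b, hb, rfl⟩
    exact ⟨Or.inl ⟨b, hb, rfl⟩, b.2⟩

lemma glue_mem_iff (K : Finset G.V)
    (P : Finset {e // eIn G K e} × Finset {e // eOut G K e}) (e : G.E) :
    e ∈ P.1.map (Function.Embedding.subtype _) ∪ P.2.map (Function.Embedding.subtype _) ↔
      (∃ h : eIn G K e, (⟨e, h⟩ : {e // eIn G K e}) ∈ P.1) ∨
      (∃ h : eOut G K e, (⟨e, h⟩ : {e // eOut G K e}) ∈ P.2) := by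
  simp only [Finset.mem_union, Finset.mem_map, Function.Embedding.coe_subtype]
  constructor
  · rintro (⟨b, hb, rfl⟩ | ⟨b, hb, rfl⟩)
    · exact Or.inl ⟨b.2, by simpa using hb⟩
    · exact Or.inr ⟨b.2, by simpa using hb⟩
  · rintro (⟨h, hb⟩ | ⟨h, hb⟩)
    · exact Or.inl ⟨⟨e, h⟩, hb, rfl⟩
    · exact Or.inr ⟨⟨e, h⟩, hb, rfl⟩

lemma inner_sum (v0 : G.V) (K : Finset G.V) (hv0 : v0 ∈ K) :
    ∑ S ∈ Finset.univ.filter (fun S : Finset G.E => compF G v0 S = K),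
        (1 - X : ℂ[X]) ^ S.card * X ^ (Fintype.card G.E - S.card)
      = X ^ Fintype.card {e // eCross G K e} *
        ∑ S1 : Finset {e // eIn G K e}, (if connA G v0 K S1 then
          (1 - X : ℂ[X]) ^ S1.card * X ^ (Fintype.card {e // eIn G K e} - S1.card) else 0) := by
  have rhs :
      X ^ Fintype.card {e // eCross G K e} *
        ∑ S1 : Finset {e // eIn G K e}, (if connA G v0 K S1 then
          (1 - X : ℂ[X]) ^ S1.card * X ^ (Fintype.card {e // eIn G K e} - S1.card) else 0)
      = ∑ P ∈ ((Finset.univ ×ˢ Finset.univ :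
            Finset (Finset {e // eIn G K e} × Finset {e // eOut G K e})).filter
            (fun P => connA G v0 K P.1)),
          X ^ Fintype.card {e // eCross G K e} *
            ((1 - X : ℂ[X]) ^ P.1.card * X ^ (Fintype.card {e // eIn G K e} - P.1.card)) *
            ((1 - X : ℂ[X]) ^ P.2.card * X ^ (Fintype.card {e // eOut G K e} - P.2.card)) := by
    rw [Finset.sum_filter, Finset.sum_product]
    rw [Finset.mul_sum]
    apply Finset.sum_congr rfl
    intro S1 _
    by_cases hc : connA G v0 K S1
    · simp only [hc, if_true]
      rw [← Finset.mul_sum, sum_weights, mul_one]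
    · simp [hc]
  rw [rhs]
  apply Finset.sum_nbij'
    (i := fun S => (S.subtype (eIn G K), S.subtype (eOut G K)))
    (j := fun P => P.1.map (Function.Embedding.subtype _) ∪
                   P.2.map (Function.Embedding.subtype _))
  · intro S hS
    rw [Finset.mem_filter] at hS
    obtain ⟨hSin, hconn⟩ := (compF_eq_iff G v0 K hv0 S).1 hS.2
    simp only [Finset.mem_filter, Finset.mem_product, Finset.mem_univ, true_and, and_true]
    intro w hw
    have : (S.subtype (eIn G K)).map (Function.Embedding.subtype _) = S.filter (eIn G K) :=
      Finset.subtype_map _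
    rw [this]
    exact hconn w hw
  · intro P hP
    rw [Finset.mem_filter] at hP
    simp only [Finset.mem_filter, Finset.mem_univ, true_and]
    rw [compF_eq_iff G v0 K hv0]
    constructor
    · intro e he
      rcases (glue_mem_iff G K P e).1 he with ⟨h, _⟩ | ⟨h, _⟩
      · exact Or.inl h
      · exact Or.inr h
    · intro w hw
      rw [glue_filter_eIn]
      exact hP.2 w hw
  · intro S hS
    rw [Finset.mem_filter] at hS
    obtain ⟨hSin, _⟩ := (compF_eq_iff G v0 K hv0 S).1 hS.2
    simp only
    rw [Finset.subtype_map, Finset.subtype_map]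
    ext e
    simp only [Finset.mem_union, Finset.mem_filter]
    constructor
    · rintro (⟨he, _⟩ | ⟨he, _⟩) <;> exact he
    · intro he
      rcases hSin e he with h | h
      · exact Or.inl ⟨he, h⟩
      · exact Or.inr ⟨he, h⟩
  · intro P hP
    ext b
    · simp only [Finset.mem_subtype]
      rw [glue_mem_iff]
      constructor
      · rintro (⟨h, hb⟩ | ⟨h, hb⟩)
        · convert hb
        · exact absurd ⟨b.2, h⟩ (not_eIn_eOut G K b)
      · intro hb
        exact Or.inl ⟨b.2, by simpa using hb⟩
    · simp only [Finset.mem_subtype]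
      rw [glue_mem_iff]
      constructor
      · rintro (⟨h, hb⟩ | ⟨h, hb⟩)
        · exact absurd ⟨h, b.2⟩ (not_eIn_eOut G K b)
        · convert hb
      · intro hb
        exact Or.inr ⟨b.2, by simpa using hb⟩
  · intro S hS
    rw [Finset.mem_filter] at hS
    obtain ⟨hSin, _⟩ := (compF_eq_iff G v0 K hv0 S).1 hS.2
    have hcard1 : (S.subtype (eIn G K)).card = (S.filter (eIn G K)).card := by
      rw [← Finset.subtype_map (p := eIn G K), Finset.card_map]
    have hcard2 : (S.subtype (eOut G K)).card = (S.filter (eOut G K)).card := by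
      rw [← Finset.subtype_map (p := eOut G K), Finset.card_map]
    have hsplit : (S.filter (eIn G K)).card + (S.filter (eOut G K)).card = S.card := by
      have h := Finset.card_filter_add_card_filter_not (s := S) (p := eIn G K)
      have : S.filter (fun e => ¬ eIn G K e) = S.filter (eOut G K) := by
        apply Finset.filter_congr
        intro e he
        constructor
        · intro hne
          rcases hSin e he with h' | h'
          · exact absurd h' hne
          · exact h'
        · intro ho hi
          exact not_eIn_eOut G K e ⟨hi, ho⟩
      rwa [this] at h
    have hle1 : (S.subtype (eIn G K)).card ≤ Fintype.card {e // eIn G K e} :=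
      Finset.card_le_univ _
    have hle2 : (S.subtype (eOut G K)).card ≤ Fintype.card {e // eOut G K e} :=
      Finset.card_le_univ _
    have htot := card_edge_split G K
    simp only
    have hexp : Fintype.card G.E - S.card =
        Fintype.card {e // eCross G K e} +
        (Fintype.card {e // eIn G K e} - (S.subtype (eIn G K)).card) +
        (Fintype.card {e // eOut G K e} - (S.subtype (eOut G K)).card) := by
      omega
    have hcards : S.card = (S.subtype (eIn G K)).card + (S.subtype (eOut G K)).card := by
      omega
    rw [hexp, hcards, pow_add, pow_add, pow_add]
    ring

lemma key_identity (v0 : G.V) :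
    ∑ K ∈ Finset.univ.filter (fun K : Finset G.V => v0 ∈ K),
        X ^ Fintype.card {e // eCross G K e} *
        ∑ S1 : Finset {e // eIn G K e}, (if connA G v0 K S1 then
          (1 - X : ℂ[X]) ^ S1.card * X ^ (Fintype.card {e // eIn G K e} - S1.card) else 0)
      = 1 := by
  have h2 : ∑ K ∈ Finset.univ.filter (fun K : Finset G.V => v0 ∈ K),
        X ^ Fintype.card {e // eCross G K e} *
        ∑ S1 : Finset {e // eIn G K e}, (if connA G v0 K S1 then
          (1 - X : ℂ[X]) ^ S1.card * X ^ (Fintype.card {e // eIn G K e} - S1.card) else 0)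
      = ∑ S : Finset G.E, (1 - X : ℂ[X]) ^ S.card * X ^ (Fintype.card G.E - S.card) := by
    rw [← Finset.sum_fiberwise_of_maps_to (g := compF G v0)
        (t := Finset.univ.filter (fun K : Finset G.V => v0 ∈ K))
        (fun S _ => by
          simp only [Finset.mem_filter, Finset.mem_univ, true_and, compF]
          exact SimpleGraph.Reachable.refl _)
        (fun S => (1 - X : ℂ[X]) ^ S.card * X ^ (Fintype.card G.E - S.card))]
    exact Finset.sum_congr rfl fun K hK =>
      (inner_sum G v0 K (Finset.mem_filter.1 hK).2).symm
  rw [h2, sum_weights]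


end General

section Specific
open scoped Classical

def sigmaSubtypeEquiv {ι : Type} (w : ι → ℕ) (P : ι → Prop) :
    {e : Σ p : ι, Fin (w p) // P e.1} ≃ Σ p : {p // P p}, Fin (w p.1) where
  toFun e := ⟨⟨e.1.1, e.2⟩, e.1.2⟩
  invFun s := ⟨⟨s.1.1, s.2⟩, s.1.2⟩
  left_inv e := rfl
  right_inv s := rfl

lemma card_sigma_subtype {ι : Type} [Fintype ι] [DecidableEq ι] (w : ι → ℕ) (P : ι → Prop)
    [DecidablePred P] [Fintype {e : Σ p : ι, Fin (w p) // P e.1}] :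
    Fintype.card {e : Σ p : ι, Fin (w p) // P e.1} = ∑ p ∈ Finset.univ.filter P, w p := by
  rw [Fintype.card_congr (sigmaSubtypeEquiv w P), Fintype.card_sigma]
  simp only [Fintype.card_fin]
  exact (Finset.sum_subtype _ (by simp) w).symm

noncomputable def orient {α : Type} [DecidableEq α] (K : Finset α) (p : Sym2 α) : α × α :=
  if p.out.1 ∈ K then p.out else p.out.swap

lemma orient_spec {α : Type} [DecidableEq α] (K : Finset α) (p : Sym2 α)
    (h1 : ¬ ∀ x ∈ p, x ∈ K) (h2 : ¬ ∀ x ∈ p, x ∉ K) :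
    (orient K p).1 ∈ K ∧ (orient K p).2 ∉ K ∧ s((orient K p).1, (orient K p).2) = p := by
  have hp : s(p.out.1, p.out.2) = p := Quot.out_eq p
  push_neg at h1 h2
  obtain ⟨x, hxp, hx⟩ := h1
  obtain ⟨y, hyp, hy⟩ := h2
  rw [← hp, Sym2.mem_iff] at hxp hyp
  unfold orient
  split_ifs with h
  · refine ⟨h, ?_, hp⟩
    rcases hxp with rfl | rfl
    · exact absurd h hx
    · exact hx
  · have hy2 : p.out.2 ∈ K := by
      rcases hyp with rfl | rfl
      · exact absurd hy h
      · exact hy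
    have hx1 : p.out.1 ∉ K := h
    exact ⟨hy2, hx1, Sym2.eq_swap.trans hp⟩

end Specific


section Cross
open Multigraph
open scoped Classical

variable {m n : ℕ}

def Apart (K : Finset (Fin m ⊕ Fin n)) : Finset (Fin m) :=
  Finset.univ.filter fun x => Sum.inl x ∈ K

def Bpart (K : Finset (Fin m ⊕ Fin n)) : Finset (Fin n) :=
  Finset.univ.filter fun y => Sum.inr y ∈ K

lemma gWeight_mk (m n a b : ℕ) (x y : Fin m ⊕ Fin n) :
    gWeight m n a b s(x, y) = if x = y then 0 else if x.isLeft = y.isLeft then a else b := rfl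

lemma K_decomp (K : Finset (Fin m ⊕ Fin n)) :
    K = (Apart K).map ⟨Sum.inl, Sum.inl_injective⟩ ∪
        (Bpart K).map ⟨Sum.inr, Sum.inr_injective⟩ := by
  ext z
  cases z <;> simp [Apart, Bpart]

lemma Kc_decomp (K : Finset (Fin m ⊕ Fin n)) :
    Kᶜ = (Apart K)ᶜ.map ⟨Sum.inl, Sum.inl_injective⟩ ∪
         (Bpart K)ᶜ.map ⟨Sum.inr, Sum.inr_injective⟩ := by
  ext z
  cases z <;> simp [Apart, Bpart]

lemma disj_map (s : Finset (Fin m)) (t : Finset (Fin n)) :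
    Disjoint (s.map ⟨Sum.inl, Sum.inl_injective⟩) (t.map ⟨Sum.inr, Sum.inr_injective⟩) := by
  rw [Finset.disjoint_left]
  rintro z hz1 hz2
  simp only [Finset.mem_map, Function.Embedding.coeFn_mk] at hz1 hz2
  obtain ⟨x, _, rfl⟩ := hz1
  obtain ⟨y, _, h⟩ := hz2
  exact Sum.inl_ne_inr h.symm

lemma pair_sum (a b : ℕ) (K : Finset (Fin m ⊕ Fin n)) :
    ∑ q ∈ K ×ˢ Kᶜ, gWeight m n a b s(q.1, q.2)
      = a * ((Apart K).card * (m - (Apart K).card) + (Bpart K).card * (n - (Bpart K).card))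
        + b * ((Apart K).card * (n - (Bpart K).card) + (Bpart K).card * (m - (Apart K).card)) := by
  rw [Finset.sum_product]
  have inner : ∀ x : Fin m ⊕ Fin n, x ∈ K →
      ∑ y ∈ Kᶜ, gWeight m n a b s(x, y)
        = (if x.isLeft then (m - (Apart K).card) * a + (n - (Bpart K).card) * b
           else (m - (Apart K).card) * b + (n - (Bpart K).card) * a) := by
    intro x hx
    conv_lhs => rw [Kc_decomp K]
    rw [Finset.sum_union (disj_map _ _), Finset.sum_map, Finset.sum_map]
    simp only [Function.Embedding.coeFn_mk]
    have hA : ∀ y ∈ (Apart K)ᶜ, gWeight m n a b s(x, Sum.inl y)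
        = (if x.isLeft then a else b) := by
      intro y hy
      have hne : x ≠ Sum.inl y := by
        rintro rfl
        exact (Finset.mem_compl.1 hy) (by simp [Apart, hx])
      rw [gWeight_mk, if_neg hne]
      cases x <;> simp
    have hB : ∀ y ∈ (Bpart K)ᶜ, gWeight m n a b s(x, Sum.inr y)
        = (if x.isLeft then b else a) := by
      intro y hy
      have hne : x ≠ Sum.inr y := by
        rintro rfl
        exact (Finset.mem_compl.1 hy) (by simp [Bpart, hx])
      rw [gWeight_mk, if_neg hne]
      cases x <;> simp
    rw [Finset.sum_congr rfl hA, Finset.sum_congr rfl hB, Finset.sum_const,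
      Finset.sum_const, Finset.card_compl, Finset.card_compl, Fintype.card_fin,
      Fintype.card_fin, smul_eq_mul, smul_eq_mul]
    cases x <;> simp [mul_comm]
  rw [Finset.sum_congr rfl inner]
  rw [← Finset.sum_filter_add_sum_filter_not K (fun z => z.isLeft = true)]
  have hfA : K.filter (fun z => z.isLeft = true) = (Apart K).map ⟨Sum.inl, Sum.inl_injective⟩ := by
    ext z
    cases z <;> simp [Apart]
  have hfB : K.filter (fun z => ¬ z.isLeft = true) = (Bpart K).map ⟨Sum.inr, Sum.inr_injective⟩ := by
    ext z
    cases z <;> simp [Bpart]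
  rw [hfA, hfB, Finset.sum_map, Finset.sum_map]
  simp only [Function.Embedding.coeFn_mk, Sum.isLeft_inl, Sum.isLeft_inr, if_true,
    Bool.false_eq_true, if_false]
  rw [Finset.sum_const, Finset.sum_const, smul_eq_mul, smul_eq_mul]
  ring

lemma cross_sum_eq (a b : ℕ) (K : Finset (Fin m ⊕ Fin n)) :
    ∑ p ∈ Finset.univ.filter (fun p : Sym2 (Fin m ⊕ Fin n) =>
        (¬ ∀ x ∈ p, x ∈ K) ∧ ¬ ∀ x ∈ p, x ∉ K), gWeight m n a b p
      = ∑ q ∈ K ×ˢ Kᶜ, gWeight m n a b s(q.1, q.2) := by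
  apply Finset.sum_nbij' (i := orient K) (j := fun q => s(q.1, q.2))
  · intro p hp
    obtain ⟨h1, h2⟩ := (Finset.mem_filter.1 hp).2
    obtain ⟨hin, hout, _⟩ := orient_spec K p h1 h2
    rw [Finset.mem_product]
    exact ⟨hin, Finset.mem_compl.2 hout⟩
  · intro q hq
    rw [Finset.mem_product, Finset.mem_compl] at hq
    rw [Finset.mem_filter]
    refine ⟨Finset.mem_univ _, ?_, ?_⟩
    · intro h
      exact hq.2 (h q.2 (by rw [Sym2.mem_iff]; right; rfl))
    · intro h
      exact h q.1 (by rw [Sym2.mem_iff]; left; rfl) hq.1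
  · intro p hp
    obtain ⟨h1, h2⟩ := (Finset.mem_filter.1 hp).2
    exact (orient_spec K p h1 h2).2.2
  · intro q hq
    rw [Finset.mem_product, Finset.mem_compl] at hq
    have hout : s((Quot.out s(q.1, q.2)).1, (Quot.out s(q.1, q.2)).2) = s(q.1, q.2) :=
      Quot.out_eq _
    rw [Sym2.eq_iff] at hout
    unfold orient
    rcases hout with ⟨h1, h2⟩ | ⟨h1, h2⟩
    · rw [if_pos (h1.symm ▸ hq.1)]
      exact Prod.ext h1 h2
    · rw [if_neg (by rw [h1]; exact hq.2)]
      exact Prod.ext h2 h1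
  · intro p hp
    obtain ⟨h1, h2⟩ := (Finset.mem_filter.1 hp).2
    conv_lhs => rw [← (orient_spec K p h1 h2).2.2]

set_option maxHeartbeats 1000000 in
lemma card_cross (m n a b : ℕ) (K : Finset (Fin m ⊕ Fin n)) :
    Fintype.card {e : (Gmnab m n a b).E // eCross (Gmnab m n a b) K e}
      = a * ((Apart K).card * (m - (Apart K).card) + (Bpart K).card * (n - (Bpart K).card))
        + b * ((Apart K).card * (n - (Bpart K).card) + (Bpart K).card * (m - (Apart K).card)) := by
  have hcast : {e : (Gmnab m n a b).E // eCross (Gmnab m n a b) K e}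
      = {e : Σ p : Sym2 (Fin m ⊕ Fin n), Fin (gWeight m n a b p) //
          (¬ ∀ x ∈ e.1, x ∈ K) ∧ ¬ ∀ x ∈ e.1, x ∉ K} := rfl
  calc Fintype.card {e : (Gmnab m n a b).E // eCross (Gmnab m n a b) K e}
      = Fintype.card {e : Σ p : Sym2 (Fin m ⊕ Fin n), Fin (gWeight m n a b p) //
          (¬ ∀ x ∈ e.1, x ∈ K) ∧ ¬ ∀ x ∈ e.1, x ∉ K} :=
        Fintype.card_congr (Equiv.cast hcast)
    _ = ∑ p ∈ Finset.univ.filter (fun p : Sym2 (Fin m ⊕ Fin n) =>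
          (¬ ∀ x ∈ p, x ∈ K) ∧ ¬ ∀ x ∈ p, x ∉ K), gWeight m n a b p :=
        card_sigma_subtype (gWeight m n a b)
          (fun p => (¬ ∀ x ∈ p, x ∈ K) ∧ ¬ ∀ x ∈ p, x ∉ K)
    _ = _ := by rw [cross_sum_eq a b K, pair_sum a b K]

end Cross


section Iso
open Multigraph
open scoped Classical

variable {m n : ℕ} (K : Finset (Fin m ⊕ Fin n))

noncomputable def eK : {x // x ∈ Apart K} ⊕ {y // y ∈ Bpart K} ≃ {z // z ∈ K} :=
  Equiv.ofBijective (Sum.elim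
      (fun x => ⟨Sum.inl x.1, (Finset.mem_filter.1 x.2).2⟩)
      (fun y => ⟨Sum.inr y.1, (Finset.mem_filter.1 y.2).2⟩)) (by
    constructor
    · rintro (x | x) (y | y) h <;>
        simp only [Sum.elim_inl, Sum.elim_inr, Subtype.mk.injEq, Sum.inl.injEq,
          Sum.inr.injEq] at h <;> first
        | (exact congrArg Sum.inl (Subtype.ext h)) | (exact congrArg Sum.inr (Subtype.ext h))
        | exact absurd h (by simp)
    · rintro ⟨z, hz⟩
      cases z with
      | inl u => exact ⟨Sum.inl ⟨u, by simp [Apart, hz]⟩, rfl⟩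
      | inr u => exact ⟨Sum.inr ⟨u, by simp [Bpart, hz]⟩, rfl⟩)

noncomputable def phi : Fin (Apart K).card ⊕ Fin (Bpart K).card ≃ {z // z ∈ K} :=
  (Equiv.sumCongr ((Apart K).orderIsoOfFin rfl).toEquiv
    ((Bpart K).orderIsoOfFin rfl).toEquiv).trans (eK K)

noncomputable def iota (z : Fin (Apart K).card ⊕ Fin (Bpart K).card) : Fin m ⊕ Fin n :=
  (phi K z).1

lemma iota_injective : Function.Injective (iota K) :=
  fun x y h => (phi K).injective (Subtype.ext h)

lemma iota_mem (z : Fin (Apart K).card ⊕ Fin (Bpart K).card) : iota K z ∈ K := (phi K z).2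

lemma iota_surj {w : Fin m ⊕ Fin n} (hw : w ∈ K) : ∃ z, iota K z = w :=
  ⟨(phi K).symm ⟨w, hw⟩, by simp [iota]⟩

lemma range_iota : Set.range (iota K) = {z | z ∈ K} := by
  ext w
  constructor
  · rintro ⟨z, rfl⟩; exact iota_mem K z
  · intro hw; exact iota_surj K hw

lemma iota_isLeft (z : Fin (Apart K).card ⊕ Fin (Bpart K).card) :
    (iota K z).isLeft = z.isLeft := by
  cases z <;> rfl

lemma weight_iota (a b : ℕ) (p : Sym2 (Fin (Apart K).card ⊕ Fin (Bpart K).card)) :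
    gWeight m n a b (Sym2.map (iota K) p) = gWeight (Apart K).card (Bpart K).card a b p := by
  induction p using Sym2.ind with
  | _ x y =>
    rw [Sym2.map_pair_eq, gWeight_mk, gWeight_mk]
    have h1 : (iota K x = iota K y) = (x = y) :=
      propext ⟨fun h => iota_injective K h, fun h => h ▸ rfl⟩
    simp only [h1, iota_isLeft]

noncomputable def tau : Sym2 (Fin (Apart K).card ⊕ Fin (Bpart K).card) ≃
    {p : Sym2 (Fin m ⊕ Fin n) // ∀ x ∈ p, x ∈ K} :=
  Equiv.ofBijective (fun p => ⟨Sym2.map (iota K) p, by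
      induction p using Sym2.ind with
      | _ x y =>
        rw [Sym2.map_pair_eq]
        intro z hz
        rw [Sym2.mem_iff] at hz
        rcases hz with rfl | rfl <;> exact iota_mem K _⟩) (by
    constructor
    · intro p q h
      exact Sym2.map.injective (iota_injective K) (congrArg Subtype.val h)
    · rintro ⟨p, hp⟩
      induction p using Sym2.ind with
      | _ x y =>
        obtain ⟨x', hx'⟩ := iota_surj K (hp x (by rw [Sym2.mem_iff]; left; rfl))
        obtain ⟨y', hy'⟩ := iota_surj K (hp y (by rw [Sym2.mem_iff]; right; rfl))
        refine ⟨s(x', y'), Subtype.ext ?_⟩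
        show Sym2.map (iota K) s(x', y') = s(x, y)
        rw [Sym2.map_pair_eq, hx', hy'])

noncomputable def eEdge (a b : ℕ) :
    (Gmnab (Apart K).card (Bpart K).card a b).E ≃
      {e : (Gmnab m n a b).E // eIn (Gmnab m n a b) K e} :=
  (Equiv.sigmaCongr (tau K) (fun p => finCongr (weight_iota K a b p).symm)).trans
    (sigmaSubtypeEquiv (gWeight m n a b) (fun p => ∀ x ∈ p, x ∈ K)).symm

lemma eEdge_ends (a b : ℕ) (f : (Gmnab (Apart K).card (Bpart K).card a b).E) :
    ((eEdge K a b f : {e : (Gmnab m n a b).E // eIn (Gmnab m n a b) K e}) :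
      (Gmnab m n a b).E).1 = Sym2.map (iota K) f.1 := rfl

lemma mem_S1' (a b : ℕ) (T : Finset (Gmnab (Apart K).card (Bpart K).card a b).E)
    (e : (Gmnab m n a b).E) :
    e ∈ ((Equiv.finsetCongr (eEdge K a b)) T).map
        (Function.Embedding.subtype _) ↔
      ∃ f ∈ T, ((eEdge K a b f : {e : (Gmnab m n a b).E //
        eIn (Gmnab m n a b) K e}) : (Gmnab m n a b).E) = e := by
  simp only [Equiv.finsetCongr_apply, Finset.mem_map, Function.Embedding.coe_subtype,
    Equiv.coe_toEmbedding]
  constructor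
  · rintro ⟨g, ⟨f, hf, rfl⟩, rfl⟩
    exact ⟨f, hf, rfl⟩
  · rintro ⟨f, hf, rfl⟩
    exact ⟨eEdge K a b f, ⟨f, hf, rfl⟩, rfl⟩

lemma adj_iff (a b : ℕ) (T : Finset (Gmnab (Apart K).card (Bpart K).card a b).E)
    (x y : Fin (Apart K).card ⊕ Fin (Bpart K).card) :
    ((Gmnab (Apart K).card (Bpart K).card a b).spanningGraph ↑T).Adj x y ↔
      ((Gmnab m n a b).spanningGraph
        ↑(((Equiv.finsetCongr (eEdge K a b)) T).map
          (Function.Embedding.subtype _))).Adj (iota K x) (iota K y) := by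
  constructor
  · rintro ⟨hxy, f, hf, hends⟩
    refine ⟨fun h => hxy (iota_injective K h),
      ((eEdge K a b f : {e : (Gmnab m n a b).E // eIn (Gmnab m n a b) K e}) :
        (Gmnab m n a b).E), ?_, ?_⟩
    · exact (mem_S1' K a b T _).2 ⟨f, hf, rfl⟩
    · show ((eEdge K a b f : {e : (Gmnab m n a b).E // eIn (Gmnab m n a b) K e}) :
        (Gmnab m n a b).E).1 = _
      rw [eEdge_ends]
      have hfx : f.1 = s(x, y) := hends
      rw [hfx]
      exact Sym2.map_pair_eq _ _ _
  · rintro ⟨hxy, e, he, hends⟩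
    obtain ⟨f, hf, rfl⟩ := (mem_S1' K a b T e).1 he
    refine ⟨fun h => hxy (by rw [h]), f, hf, ?_⟩
    have h2 : Sym2.map (iota K) f.1 = Sym2.map (iota K) s(x, y) := by
      rw [Sym2.map_pair_eq]
      exact hends
    exact Sym2.map.injective (iota_injective K) h2

lemma conn_iff (a b : ℕ) (v0 : Fin m ⊕ Fin n) (hv0 : v0 ∈ K)
    (T : Finset (Gmnab (Apart K).card (Bpart K).card a b).E) :
    ((Gmnab (Apart K).card (Bpart K).card a b).spanningGraph ↑T).Connected ↔
      connA (Gmnab m n a b) v0 K ((Equiv.finsetCongr (eEdge K a b)) T) := by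
  have hR : ∀ u w : Fin m ⊕ Fin n, u ∈ Set.range (iota K) →
      ((Gmnab m n a b).spanningGraph
        ↑(((Equiv.finsetCongr (eEdge K a b)) T).map
          (Function.Embedding.subtype _))).Adj u w → w ∈ Set.range (iota K) := by
    rintro u w - ⟨huw, e, he, hends⟩
    obtain ⟨f, hf, rfl⟩ := (mem_S1' K a b T e).1 he
    have hin : eIn (Gmnab m n a b) K
        ((eEdge K a b f : {e : (Gmnab m n a b).E // eIn (Gmnab m n a b) K e}) :
          (Gmnab m n a b).E) := (eEdge K a b f).2
    have hw : w ∈ K := hin w (by rw [hends]; exact Sym2.mem_mk_right _ _)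
    rw [range_iota]
    exact hw
  have hreach := reachable_map_iff (iota_injective K) (adj_iff K a b T) hR
  constructor
  · intro hc
    intro w hw
    obtain ⟨z0, hz0⟩ := iota_surj K hv0
    obtain ⟨z, hz⟩ := iota_surj K hw
    have := (hreach z0 z).1 (hc.preconnected z0 z)
    rwa [hz0, hz] at this
  · intro hc
    obtain ⟨z0, hz0⟩ := iota_surj K hv0
    rw [SimpleGraph.connected_iff]
    refine ⟨?_, ⟨z0⟩⟩
    intro x y
    have h1 := hc (iota K x) (iota_mem K x)
    have h2 := hc (iota K y) (iota_mem K y)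
    exact (hreach x y).2 (h1.symm.trans h2)

lemma relA_eq (a b : ℕ) (v0 : Fin m ⊕ Fin n) (hv0 : v0 ∈ K) :
    ∑ S1 : Finset {e : (Gmnab m n a b).E // eIn (Gmnab m n a b) K e},
      (if connA (Gmnab m n a b) v0 K S1 then
        (1 - X : ℂ[X]) ^ S1.card *
          X ^ (Fintype.card {e : (Gmnab m n a b).E // eIn (Gmnab m n a b) K e} - S1.card)
        else 0)
      = (Gmnab (Apart K).card (Bpart K).card a b).Rel := by
  unfold Multigraph.Rel
  have hcardE : Fintype.card {e : (Gmnab m n a b).E // eIn (Gmnab m n a b) K e}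
      = Fintype.card (Gmnab (Apart K).card (Bpart K).card a b).E :=
    Fintype.card_congr (eEdge K a b).symm
  refine (Fintype.sum_equiv (Equiv.finsetCongr (eEdge K a b)) _ _ ?_).symm
  intro T
  have hcard : ((Equiv.finsetCongr (eEdge K a b)) T).card = T.card := by
    rw [Equiv.finsetCongr_apply, Finset.card_map]
  refine if_congr (conn_iff K a b v0 hv0 T) ?_ rfl
  rw [hcard, hcardE]

end Iso


section Count
open scoped Classical
variable {m n : ℕ}

lemma count_A (m : ℕ) (hm : 0 < m) (i : ℕ) (hi : 1 ≤ i) :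
    (Finset.univ.filter (fun A : Finset (Fin m) => (⟨0, hm⟩ : Fin m) ∈ A ∧ A.card = i)).card
      = Nat.choose (m - 1) (i - 1) := by
  have key : (Finset.univ.filter (fun A : Finset (Fin m) =>
        (⟨0, hm⟩ : Fin m) ∈ A ∧ A.card = i)).card
      = (Finset.powersetCard (i - 1) (Finset.univ.erase (⟨0, hm⟩ : Fin m))).card := by
    apply Finset.card_nbij' (i := fun A => A.erase ⟨0, hm⟩)
      (j := fun s => insert (⟨0, hm⟩ : Fin m) s)
    · intro A hA
      rw [Finset.mem_coe, Finset.mem_filter] at hA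
      rw [Finset.mem_coe, Finset.mem_powersetCard]
      refine ⟨Finset.erase_subset_erase _ (Finset.subset_univ A), ?_⟩
      rw [Finset.card_erase_of_mem hA.2.1, hA.2.2]
    · intro t ht
      rw [Finset.mem_coe, Finset.mem_powersetCard] at ht
      have hz : (⟨0, hm⟩ : Fin m) ∉ t := fun h => (Finset.mem_erase.1 (ht.1 h)).1 rfl
      rw [Finset.mem_coe, Finset.mem_filter]
      refine ⟨Finset.mem_univ _, Finset.mem_insert_self _ _, ?_⟩
      rw [Finset.card_insert_of_notMem hz, ht.2]
      omega
    · intro A hA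
      rw [Finset.mem_coe, Finset.mem_filter] at hA
      exact Finset.insert_erase hA.2.1
    · intro t ht
      rw [Finset.mem_coe, Finset.mem_powersetCard] at ht
      have hz : (⟨0, hm⟩ : Fin m) ∉ t := fun h => (Finset.mem_erase.1 (ht.1 h)).1 rfl
      exact Finset.erase_insert hz
  rw [key, Finset.card_powersetCard, Finset.card_erase_of_mem (Finset.mem_univ _),
    Finset.card_univ, Fintype.card_fin]

lemma count_B (n j : ℕ) :
    (Finset.univ.filter (fun B : Finset (Fin n) => B.card = j)).card = Nat.choose n j := by
  have key : Finset.univ.filter (fun B : Finset (Fin n) => B.card = j)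
      = Finset.powersetCard j Finset.univ := by
    ext s
    rw [Finset.mem_filter, Finset.mem_powersetCard]
    constructor
    · exact fun h => ⟨Finset.subset_univ _, h.2⟩
    · exact fun h => ⟨Finset.mem_univ _, h.2⟩
  rw [key, Finset.card_powersetCard, Finset.card_univ, Fintype.card_fin]

lemma Apart_union (s : Finset (Fin m)) (t : Finset (Fin n)) :
    Apart (s.map ⟨Sum.inl, Sum.inl_injective⟩ ∪ t.map ⟨Sum.inr, Sum.inr_injective⟩) = s := by
  ext u
  simp [Apart]

lemma Bpart_union (s : Finset (Fin m)) (t : Finset (Fin n)) :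
    Bpart (s.map ⟨Sum.inl, Sum.inl_injective⟩ ∪ t.map ⟨Sum.inr, Sum.inr_injective⟩) = t := by
  ext u
  simp [Bpart]

lemma count_K (m n : ℕ) (hm : 0 < m) (i j : ℕ) (hi : 1 ≤ i) :
    (Finset.univ.filter (fun K : Finset (Fin m ⊕ Fin n) =>
      Sum.inl (⟨0, hm⟩ : Fin m) ∈ K ∧ (Apart K).card = i ∧ (Bpart K).card = j)).card
      = Nat.choose (m - 1) (i - 1) * Nat.choose n j := by
  rw [← count_A m hm i hi, ← count_B n j, ← Finset.card_product]
  apply Finset.card_nbij' (i := fun K => (Apart K, Bpart K))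
    (j := fun P => P.1.map ⟨Sum.inl, Sum.inl_injective⟩ ∪ P.2.map ⟨Sum.inr, Sum.inr_injective⟩)
  · intro K hK
    rw [Finset.mem_coe, Finset.mem_filter] at hK
    rw [Finset.mem_coe, Finset.mem_product, Finset.mem_filter, Finset.mem_filter]
    refine ⟨⟨Finset.mem_univ _, ?_, hK.2.2.1⟩, Finset.mem_univ _, hK.2.2.2⟩
    exact Finset.mem_filter.2 ⟨Finset.mem_univ _, hK.2.1⟩
  · intro P hP
    rw [Finset.mem_coe, Finset.mem_product, Finset.mem_filter, Finset.mem_filter] at hP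
    rw [Finset.mem_coe, Finset.mem_filter, Apart_union, Bpart_union]
    refine ⟨Finset.mem_univ _, ?_, hP.1.2.2, hP.2.2⟩
    rw [Finset.mem_union]
    left
    rw [Finset.mem_map]
    exact ⟨⟨0, hm⟩, hP.1.2.1, rfl⟩
  · intro K hK
    exact (K_decomp K).symm
  · intro P hP
    exact Prod.ext (Apart_union _ _) (Bpart_union _ _)

end Count


section Final
open Multigraph
open scoped Classical

theorem main (m n a b : ℕ) (hm : 0 < m) (hn : 0 < n) (ha : 0 < a)
    (hb : 0 < b) :
    ∑ i ∈ Finset.Icc 1 m, ∑ j ∈ Finset.range (n + 1),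
      C ((Nat.choose (m - 1) (i - 1) * Nat.choose n j : ℕ) : ℂ) *
        X ^ (a * (i * (m - i) + j * (n - j)) + b * (i * (n - j) + j * (m - i))) *
        (Gmnab i j a b).Rel = 1 := by
  have hkey := key_identity (Gmnab m n a b) (Sum.inl ⟨0, hm⟩)
  have hterm : ∀ K ∈ Finset.univ.filter
      (fun K : Finset (Gmnab m n a b).V => Sum.inl (⟨0, hm⟩ : Fin m) ∈ K),
      (X : ℂ[X]) ^ Fintype.card {e // eCross (Gmnab m n a b) K e} *
        ∑ S1 : Finset {e // eIn (Gmnab m n a b) K e},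
          (if connA (Gmnab m n a b) (Sum.inl ⟨0, hm⟩) K S1 then
            (1 - X : ℂ[X]) ^ S1.card *
              X ^ (Fintype.card {e // eIn (Gmnab m n a b) K e} - S1.card) else 0)
      = X ^ (a * ((Apart K).card * (m - (Apart K).card) +
              (Bpart K).card * (n - (Bpart K).card))
            + b * ((Apart K).card * (n - (Bpart K).card) +
              (Bpart K).card * (m - (Apart K).card)))
          * (Gmnab (Apart K).card (Bpart K).card a b).Rel := by
    intro K hK
    rw [Finset.mem_filter] at hK
    rw [card_cross m n a b K, relA_eq K a b (Sum.inl ⟨0, hm⟩) hK.2]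
  replace hkey := (Finset.sum_congr rfl hterm).symm.trans (by convert hkey <;> rfl : _ = (1 : ℂ[X]))
  rw [← hkey]
  rw [← Finset.sum_product']
  have hmaps : ∀ K ∈ Finset.univ.filter
      (fun K : Finset (Gmnab m n a b).V => Sum.inl (⟨0, hm⟩ : Fin m) ∈ K),
      ((Apart K).card, (Bpart K).card) ∈ Finset.Icc 1 m ×ˢ Finset.range (n + 1) := by
    intro K hK
    rw [Finset.mem_filter] at hK
    rw [Finset.mem_product, Finset.mem_Icc, Finset.mem_range]
    have h1 : 0 < (Apart K).card := by
      rw [Finset.card_pos]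
      exact ⟨⟨0, hm⟩, by simp [Apart]; exact hK.2⟩
    have h2 : (Apart K).card ≤ m := by
      simpa using Finset.card_le_univ (Apart K)
    have h3 : (Bpart K).card ≤ n := by
      simpa using Finset.card_le_univ (Bpart K)
    exact ⟨⟨h1, h2⟩, by omega⟩
  rw [← Finset.sum_fiberwise_of_maps_to hmaps
      (fun K => X ^ (a * ((Apart K).card * (m - (Apart K).card) +
              (Bpart K).card * (n - (Bpart K).card))
            + b * ((Apart K).card * (n - (Bpart K).card) +
              (Bpart K).card * (m - (Apart K).card)))
          * (Gmnab (Apart K).card (Bpart K).card a b).Rel)]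
  apply Finset.sum_congr rfl
  intro p hp
  rw [Finset.mem_product, Finset.mem_Icc] at hp
  have hfib : ∀ K ∈ Finset.univ.filter (fun K : Finset (Fin m ⊕ Fin n) =>
        Sum.inl (⟨0, hm⟩ : Fin m) ∈ K ∧ (Apart K).card = p.1 ∧ (Bpart K).card = p.2),
      X ^ (a * ((Apart K).card * (m - (Apart K).card) +
              (Bpart K).card * (n - (Bpart K).card))
            + b * ((Apart K).card * (n - (Bpart K).card) +
              (Bpart K).card * (m - (Apart K).card)))
          * (Gmnab (Apart K).card (Bpart K).card a b).Rel
        = X ^ (a * (p.1 * (m - p.1) + p.2 * (n - p.2)) +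
            b * (p.1 * (n - p.2) + p.2 * (m - p.1))) * (Gmnab p.1 p.2 a b).Rel := by
    intro K hK
    rw [Finset.mem_filter] at hK
    obtain ⟨-, -, h1, h2⟩ := hK
    rw [h1, h2]
  refine Eq.symm ((Finset.sum_congr ?_ hfib).trans ?_)
  · ext K
    simp only [Finset.mem_filter, Finset.mem_univ, true_and, Prod.ext_iff]
    try tauto
    unfold Gmnab ofWeight at *
    simp only [Finset.mem_filter, Finset.mem_univ, true_and]
  · rw [Finset.sum_const, count_K m n hm p.1 p.2 hp.1.1, nsmul_eq_mul]
    try rw [← map_natCast (Polynomial.C : ℂ →+* ℂ[X]), Nat.cast_mul, mul_assoc]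
    try norm_num
    try push_cast
    try ring

end Final

end RelProof

namespace Multigraph

/-- For positive integers `m, n, a, b`, as an identity of polynomials
in `q`:
`Σ_{i=1}^{m} Σ_{j=0}^{n} C(m-1,i-1)·C(n,j)·q^{a[i(m-i)+j(n-j)]+b[i(n-j)+j(m-i)]}·Rel(G_{i,j}^{a,b};q) = 1`. -/
theorem Gmnab_recursion (m n a b : ℕ) (hm : 0 < m) (hn : 0 < n) (ha : 0 < a)
    (hb : 0 < b) :
    ∑ i ∈ Finset.Icc 1 m, ∑ j ∈ Finset.range (n + 1),
      C ((Nat.choose (m - 1) (i - 1) * Nat.choose n j : ℕ) : ℂ) *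
        X ^ (a * (i * (m - i) + j * (n - j)) + b * (i * (n - j) + j * (m - i))) *
        (Gmnab i j a b).Rel = 1 :=
  _root_.RelProof.main m n a b hm hn ha hb

end Multigraph
end

section
/- Let G be a connected multigraph with n vertices and m edges, let H(u,v) be a gadget, and let G[H(u,v)] be any edge substitution of H(u,v) into G. Then, as an identity of polynomials in q, Rel(G[H(u,v)]; q) = Σ_{i=0}^{m−n+1} F_i · Rel(H;q)^{m−i} · spRel_{u,v}(H;q)^{i}, where (F_0, …, F_{m−n+1}) is the F-vector of G; equivalently, Rel(G[H(u,v)];q) = Rel(H;q)^m · F(G; spRel_{u,v}(H;q)/Rel(H;q)). -/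
open Polynomial

namespace Multigraph


section Aux

lemma sym2_exists_eq {α : Type*} (z : Sym2 α) : ∃ a b, z = s(a, b) :=
  Sym2.inductionOn (f := fun z => ∃ a b, z = s(a, b)) z (fun x y => ⟨x, y, rfl⟩)

lemma reachable_rec {V : Type*} {Γ : SimpleGraph V} {P : V → Prop}
    (h : ∀ a b, Γ.Adj a b → P a → P b) {x y : V} (hr : Γ.Reachable x y) (hx : P x) : P y := by
  obtain ⟨w⟩ := hr
  induction w with
  | nil => exact hx
  | cons ha _ ih => exact ih (h _ _ ha hx)

variable (G Hg : Multigraph) (u v : Hg.V) (ori : G.E → G.V × G.V)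

lemma ori_ne (hori : ∀ e, s((ori e).1, (ori e).2) = G.ends e) (e : G.E) :
    (ori e).1 ≠ (ori e).2 := by
  have hd := G.loopless e
  rw [← hori e, Sym2.mk_isDiag_iff] at hd
  exact hd

lemma subVertex_injective (hori : ∀ e, s((ori e).1, (ori e).2) = G.ends e) (e : G.E) :
    Function.Injective (subVertex G Hg u v ori e) := by
  have hne := ori_ne G ori hori e
  intro x y hxy
  unfold subVertex at hxy
  split_ifs at hxy <;> simp_all

lemma subVertex_u (e : G.E) : subVertex G Hg u v ori e u = Sum.inl (ori e).1 := by
  simp [subVertex]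

lemma subVertex_v (huv : u ≠ v) (e : G.E) :
    subVertex G Hg u v ori e v = Sum.inl (ori e).2 := by
  unfold subVertex
  rw [dif_neg (fun h => huv h.symm), dif_pos rfl]

lemma subVertex_inr {e : G.E} {x : Hg.V} (hx : x ≠ u) (hx' : x ≠ v) :
    subVertex G Hg u v ori e x = Sum.inr (e, ⟨x, hx, hx'⟩) := by
  simp [subVertex, hx, hx']

lemma subVertex_eq_inr {e e' : G.E} {x : Hg.V} {w : {x : Hg.V // x ≠ u ∧ x ≠ v}}
    (h : subVertex G Hg u v ori e x = Sum.inr (e', w)) : e' = e ∧ x = w.1 := by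
  unfold subVertex at h
  split_ifs at h with h1 h2 <;> cases h
  exact ⟨rfl, rfl⟩

variable (hori : ∀ e, s((ori e).1, (ori e).2) = G.ends e)

/-- Adjacency in the spanning subgraph of an edge substitution. -/
lemma edgeSub_adj {S : Set (G.E × Hg.E)} {p q : (edgeSub G Hg u v ori hori).V} :
    ((edgeSub G Hg u v ori hori).spanningGraph S).Adj p q ↔
      ∃ (e : G.E) (a b : Hg.V),
        (Hg.spanningGraph {f | (e, f) ∈ S}).Adj a b ∧
        p = subVertex G Hg u v ori e a ∧ q = subVertex G Hg u v ori e b := by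
  constructor
  · rintro ⟨hpq, ⟨e, f⟩, hef, hends⟩
    obtain ⟨a, b, hf⟩ := sym2_exists_eq (Hg.ends f)
    have hends' : Sym2.map (subVertex G Hg u v ori e) (Hg.ends f) = s(p, q) := hends
    rw [hf, Sym2.map_pair_eq] at hends'
    replace hends' := Sym2.eq_iff.mp hends'
    have hab : a ≠ b := by
      have := Hg.loopless f
      rw [hf, Sym2.mk_isDiag_iff] at this
      exact this
    rcases hends' with ⟨h1, h2⟩ | ⟨h1, h2⟩
    · exact ⟨e, a, b, ⟨hab, f, hef, hf⟩, h1.symm, h2.symm⟩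
    · exact ⟨e, b, a, ⟨hab.symm, f, hef, by rw [hf, Sym2.eq_swap]⟩, h2.symm, h1.symm⟩
  · rintro ⟨e, a, b, ⟨hab, f, hf, hends⟩, hp, hq⟩
    refine ⟨?_, ⟨(e, f), hf, ?_⟩⟩
    · rw [hp, hq]
      exact fun h => hab (subVertex_injective G Hg u v ori hori e h)
    · show Sym2.map (subVertex G Hg u v ori e) (Hg.ends f) = s(p, q)
      rw [hends, Sym2.map_pair_eq, hp, hq]
      rfl


/-- Reachability in a slice lifts to the edge-substitution graph. -/
lemma edgeSub_reach_of_slice {S : Set (G.E × Hg.E)} {e : G.E} {a b : Hg.V}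
    (h : (Hg.spanningGraph {f | (e, f) ∈ S}).Reachable a b) :
    ((edgeSub G Hg u v ori hori).spanningGraph S).Reachable
      (subVertex G Hg u v ori e a) (subVertex G Hg u v ori e b) := by
  refine SimpleGraph.Reachable.map
    ⟨subVertex G Hg u v ori e, fun {x y} hxy => ?_⟩ h
  exact (edgeSub_adj G Hg u v ori hori).2 ⟨e, x, y, hxy, rfl, rfl⟩

lemma subVertex_eq_inl {e : G.E} {x : Hg.V} {z : G.V}
    (h : subVertex G Hg u v ori e x = Sum.inl z) :
    (x = u ∧ z = (ori e).1) ∨ (x = v ∧ z = (ori e).2) := by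
  unfold subVertex at h
  split_ifs at h with h1 h2
  · exact Or.inl ⟨h1, (Sum.inl.inj h).symm⟩
  · exact Or.inr ⟨h2, (Sum.inl.inj h).symm⟩

lemma conn_of_good_reach (hcard : 2 ≤ Fintype.card Hg.V) {A : Set Hg.E}
    (hgood : ∀ w, (Hg.spanningGraph A).Reachable w u ∨ (Hg.spanningGraph A).Reachable w v)
    (hr : (Hg.spanningGraph A).Reachable u v) : (Hg.spanningGraph A).Connected := by
  have hne : Nonempty Hg.V := Fintype.card_pos_iff.mp (by omega)
  rw [SimpleGraph.connected_iff]
  refine ⟨fun a b => ?_, hne⟩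
  have key : ∀ w : Hg.V, (Hg.spanningGraph A).Reachable w u := by
    intro w
    rcases hgood w with h | h
    · exact h
    · exact h.trans hr.symm
  exact (key a).trans (key b).symm

lemma good_iff (hcard : 2 ≤ Fintype.card Hg.V) (A : Set Hg.E) :
    (∀ w, (Hg.spanningGraph A).Reachable w u ∨ (Hg.spanningGraph A).Reachable w v) ↔
      ((Hg.spanningGraph A).Connected ∨ Hg.SplitState u v A) := by
  constructor
  · intro h
    by_cases huvr : (Hg.spanningGraph A).Reachable u v
    · exact Or.inl (conn_of_good_reach Hg u v hcard h huvr)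
    · exact Or.inr ⟨huvr, h⟩
  · rintro (hc | hs) w
    · exact Or.inl (hc.preconnected w u)
    · exact hs.2 w

lemma slices_good_of_conn {S : Set (G.E × Hg.E)}
    (hBconn : ((edgeSub G Hg u v ori hori).spanningGraph S).Connected) (e : G.E) (w : Hg.V) :
    (Hg.spanningGraph {f | (e, f) ∈ S}).Reachable w u ∨
      (Hg.spanningGraph {f | (e, f) ∈ S}).Reachable w v := by
  by_cases hwu : w = u
  · exact Or.inl (hwu ▸ SimpleGraph.Reachable.refl _)
  by_cases hwv : w = v
  · exact Or.inr (hwv ▸ SimpleGraph.Reachable.refl _)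
  set Γ := Hg.spanningGraph {f | (e, f) ∈ S} with hΓ
  set P : (edgeSub G Hg u v ori hori).V → Prop := fun p =>
    ∀ (w' : {x : Hg.V // x ≠ u ∧ x ≠ v}), p = Sum.inr (e, w') →
      (Γ.Reachable w'.1 u ∨ Γ.Reachable w'.1 v) with hP
  have hstep : ∀ p q, ((edgeSub G Hg u v ori hori).spanningGraph S).Adj p q → P p → P q := by
    intro p q hadj hPp w' hq
    obtain ⟨e'', a, b, hab, hp, hq'⟩ := (edgeSub_adj G Hg u v ori hori).1 hadj
    obtain ⟨he, hb⟩ := subVertex_eq_inr G Hg u v ori (hq'.symm.trans hq)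
    subst he
    by_cases hau : a = u
    · exact Or.inl (hb ▸ (hau ▸ hab.symm).reachable)
    by_cases hav : a = v
    · exact Or.inr (hb ▸ (hav ▸ hab.symm).reachable)
    · have hPa := hPp ⟨a, hau, hav⟩ (hp.trans (subVertex_inr G Hg u v ori hau hav))
      have hba : Γ.Reachable w'.1 a := hb ▸ hab.symm.reachable
      rcases hPa with h | h
      · exact Or.inl (hba.trans h)
      · exact Or.inr (hba.trans h)
  have hPstart : P (subVertex G Hg u v ori e u) := by
    rw [subVertex_u]
    intro w' h
    cases h
  have hr := hBconn.preconnected (subVertex G Hg u v ori e u) (subVertex G Hg u v ori e w)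
  have := reachable_rec hstep hr hPstart ⟨w, hwu, hwv⟩ (subVertex_inr G Hg u v ori hwu hwv)
  exact this

lemma cgConn_of_conn (hcard : 2 ≤ Fintype.card Hg.V) (huv : u ≠ v) (hG : G.Connected) {S : Set (G.E × Hg.E)}
    (hBconn : ((edgeSub G Hg u v ori hori).spanningGraph S).Connected) :
    (G.spanningGraph {e | (Hg.spanningGraph {f | (e, f) ∈ S}).Connected}).Connected := by
  have hgood := slices_good_of_conn G Hg u v ori hori hBconn
  set CG := G.spanningGraph {e | (Hg.spanningGraph {f | (e, f) ∈ S}).Connected} with hCG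
  have hGne : Nonempty G.V := hG.nonempty
  rw [SimpleGraph.connected_iff]
  refine ⟨fun x y => ?_, hGne⟩
  set P : (edgeSub G Hg u v ori hori).V → Prop := fun p =>
    (∀ z : G.V, p = Sum.inl z → CG.Reachable x z) ∧
    (∀ (e' : G.E) (w' : {x : Hg.V // x ≠ u ∧ x ≠ v}), p = Sum.inr (e', w') →
      ((Hg.spanningGraph {f | (e', f) ∈ S}).Reachable w'.1 u → CG.Reachable x (ori e').1) ∧
      ((Hg.spanningGraph {f | (e', f) ∈ S}).Reachable w'.1 v → CG.Reachable x (ori e').2)) with hPdef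
  have hstep : ∀ p q, ((edgeSub G Hg u v ori hori).spanningGraph S).Adj p q → P p → P q := by
    intro p q hadj hPp
    obtain ⟨e, a, b, hab, hp, hq⟩ := (edgeSub_adj G Hg u v ori hori).1 hadj
    have hadjCG : (Hg.spanningGraph {f | (e, f) ∈ S}).Reachable u v → CG.Adj (ori e).1 (ori e).2 := by
      intro hruv
      refine ⟨ori_ne G ori hori e, e, ?_, (hori e).symm⟩
      exact conn_of_good_reach Hg u v hcard (fun w => hgood e w) hruv
    have key : ((Hg.spanningGraph {f | (e, f) ∈ S}).Reachable a u → CG.Reachable x (ori e).1) ∧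
        ((Hg.spanningGraph {f | (e, f) ∈ S}).Reachable a v → CG.Reachable x (ori e).2) := by
      by_cases hau : a = u
      · rw [hau] at hp ⊢
        have h1 := hPp.1 (ori e).1 (hp.trans (subVertex_u G Hg u v ori e))
        exact ⟨fun _ => h1, fun hr => h1.trans (hadjCG hr).reachable⟩
      by_cases hav : a = v
      · rw [hav] at hp ⊢
        have h1 := hPp.1 (ori e).2 (hp.trans (subVertex_v G Hg u v ori huv e))
        exact ⟨fun hr => h1.trans (hadjCG hr.symm).symm.reachable, fun _ => h1⟩
      · exact hPp.2 e ⟨a, hau, hav⟩ (hp.trans (subVertex_inr G Hg u v ori hau hav))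
    constructor
    · intro z hz
      rcases subVertex_eq_inl G Hg u v ori (hq.symm.trans hz) with ⟨hbu, hz'⟩ | ⟨hbv, hz'⟩
      · exact hz' ▸ key.1 ((hbu ▸ hab).reachable)
      · exact hz' ▸ key.2 ((hbv ▸ hab).reachable)
    · intro e' w' hw
      obtain ⟨he, hb⟩ := subVertex_eq_inr G Hg u v ori (hq.symm.trans hw)
      subst he
      constructor
      · intro hr
        exact key.1 (hab.reachable.trans (hb ▸ hr))
      · intro hr
        exact key.2 (hab.reachable.trans (hb ▸ hr))
  have hbase : P (Sum.inl x : (edgeSub G Hg u v ori hori).V) := by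
    constructor
    · intro z hz
      cases hz
      exact SimpleGraph.Reachable.refl _
    · intro e' w' hw
      cases hw
  have hr := hBconn.preconnected (Sum.inl x) (Sum.inl y)
  exact (reachable_rec hstep hr hbase).1 y rfl

lemma conn_of_good_cg (huv : u ≠ v) (hG : G.Connected) {S : Set (G.E × Hg.E)}
    (hgood : ∀ e w, (Hg.spanningGraph {f | (e, f) ∈ S}).Reachable w u ∨
      (Hg.spanningGraph {f | (e, f) ∈ S}).Reachable w v)
    (hcg : (G.spanningGraph {e | (Hg.spanningGraph {f | (e, f) ∈ S}).Connected}).Connected) :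
    ((edgeSub G Hg u v ori hori).spanningGraph S).Connected := by
  set B := edgeSub G Hg u v ori hori with hB
  haveI hGne : Nonempty G.V := hG.nonempty
  rw [SimpleGraph.connected_iff]
  refine ⟨?_, ⟨Sum.inl (Classical.arbitrary G.V)⟩⟩
  have hinl : ∀ x y : G.V, (B.spanningGraph S).Reachable (Sum.inl x) (Sum.inl y) := by
    intro x y
    have hr := hcg.preconnected x y
    refine reachable_rec (P := fun z => (B.spanningGraph S).Reachable (Sum.inl x) (Sum.inl z))
      ?_ hr (SimpleGraph.Reachable.refl _)
    intro a b hadj hacc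
    obtain ⟨hne', e, hmem, hends⟩ := hadj
    have hruv : (Hg.spanningGraph {f | (e, f) ∈ S}).Reachable u v := hmem.preconnected u v
    have hlift := edgeSub_reach_of_slice G Hg u v ori hori hruv
    rw [subVertex_u, subVertex_v G Hg u v ori huv] at hlift
    have hse : s((ori e).1, (ori e).2) = s(a, b) := (hori e).trans hends
    rw [Sym2.eq_iff] at hse
    rcases hse with ⟨h1, h2⟩ | ⟨h1, h2⟩
    · exact hacc.trans (h1 ▸ h2 ▸ hlift)
    · exact hacc.trans (h1 ▸ h2 ▸ hlift.symm)
  have anchor : ∀ p : B.V, ∃ x : G.V, (B.spanningGraph S).Reachable p (Sum.inl x) := by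
    rintro (x | ⟨e, w, hw1, hw2⟩)
    · exact ⟨x, SimpleGraph.Reachable.refl _⟩
    · rcases hgood e w with h | h
      · refine ⟨(ori e).1, ?_⟩
        have := edgeSub_reach_of_slice G Hg u v ori hori h
        rwa [subVertex_inr G Hg u v ori hw1 hw2, subVertex_u] at this
      · refine ⟨(ori e).2, ?_⟩
        have := edgeSub_reach_of_slice G Hg u v ori hori h
        rwa [subVertex_inr G Hg u v ori hw1 hw2, subVertex_v G Hg u v ori huv] at this
  intro p q
  obtain ⟨xp, hp⟩ := anchor p
  obtain ⟨xq, hq⟩ := anchor q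
  exact (hp.trans (hinl xp xq)).trans hq.symm

/-- The key connectivity characterization for edge substitutions. -/
lemma edgeSub_conn_iff (hcard : 2 ≤ Fintype.card Hg.V) (huv : u ≠ v) (hG : G.Connected) (S : Set (G.E × Hg.E)) :
    ((edgeSub G Hg u v ori hori).spanningGraph S).Connected ↔
      (∀ e, (Hg.spanningGraph {f | (e, f) ∈ S}).Connected ∨
          Hg.SplitState u v {f | (e, f) ∈ S}) ∧
        (G.spanningGraph {e | (Hg.spanningGraph {f | (e, f) ∈ S}).Connected}).Connected := by
  constructor
  · intro h
    exact ⟨fun e => (good_iff Hg u v hcard _).1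
        (fun w => slices_good_of_conn G Hg u v ori hori h e w),
      cgConn_of_conn G Hg u v ori hori hcard huv hG h⟩
  · rintro ⟨h1, h2⟩
    exact conn_of_good_cg G Hg u v ori hori huv hG
      (fun e w => (good_iff Hg u v hcard _).2 (h1 e) w) h2

section Slice

variable {α β : Type} [Fintype α] [DecidableEq α] [Fintype β] [DecidableEq β]

/-- Subsets of `α × β` correspond to functions `α → Finset β` (slices). -/
def sliceEquiv (α β : Type) [Fintype α] [DecidableEq α] [Fintype β] [DecidableEq β] :
    (α → Finset β) ≃ Finset (α × β) where
  toFun g := Finset.univ.filter fun p => p.2 ∈ g p.1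
  invFun S a := Finset.univ.filter fun b => (a, b) ∈ S
  left_inv g := by funext a; ext b; simp
  right_inv S := by ext ⟨a, b⟩; simp

lemma sliceEquiv_set (g : α → Finset β) (a : α) :
    {b | (a, b) ∈ (↑(sliceEquiv α β g) : Set (α × β))} = (↑(g a) : Set β) := by
  ext b
  simp [sliceEquiv]

lemma sliceEquiv_card (g : α → Finset β) :
    (sliceEquiv α β g).card = ∑ a : α, (g a).card := by
  classical
  rw [Finset.card_eq_sum_card_fiberwise (f := Prod.fst) (t := Finset.univ)
    (fun x _ => Finset.mem_univ _)]
  refine Finset.sum_congr rfl fun a _ => ?_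
  have : ((sliceEquiv α β g).filter fun p => p.1 = a) = (g a).image (fun b => (a, b)) := by
    ext ⟨x, y⟩
    simp only [sliceEquiv, Equiv.coe_fn_mk, Finset.mem_filter, Finset.mem_univ, true_and,
      Finset.mem_image]
    constructor
    · rintro ⟨h1, rfl⟩
      exact ⟨y, h1, rfl⟩
    · rintro ⟨b, hb, h⟩
      obtain ⟨rfl, rfl⟩ := Prod.mk.injEq .. ▸ h
      exact ⟨by simpa using hb, rfl⟩
  rw [this, Finset.card_image_of_injective _ (fun b c h => by simpa using h)]

end Slice

end Aux

/-- A connected spanning subgraph needs at least `|V| - 1` edges. -/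
lemma card_le_of_spanning_conn (G : Multigraph) (A : Finset G.E)
    (h : (G.spanningGraph (↑A : Set G.E)).Connected) : Fintype.card G.V ≤ A.card + 1 := by
  classical
  by_cases hV : Fintype.card G.V ≤ 1
  · omega
  set Γ := G.spanningGraph (↑A : Set G.E) with hΓ
  obtain ⟨root⟩ := h.nonempty
  have key : ∀ x : G.V, x ≠ root → ∃ (e : G.E) (w : G.V), e ∈ A ∧ G.ends e = s(x, w) ∧
      Γ.dist root w + 1 = Γ.dist root x := by
    intro x hx
    have hreach : Γ.Reachable root x := h.preconnected root x
    obtain ⟨p, hp⟩ := hreach.exists_walk_length_eq_dist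
    have hd : Γ.dist root x ≠ 0 := by
      exact fun hh => hx (hreach.dist_eq_zero_iff.mp hh).symm
    cases hq : p.reverse with
    | nil =>
      exfalso
      have := congrArg SimpleGraph.Walk.length hq
      rw [SimpleGraph.Walk.length_reverse, hp] at this
      exact hd this
    | @cons _ w _ hadj q =>
      obtain ⟨hne, e, heA, hends⟩ := hadj
      refine ⟨e, w, heA, hends, ?_⟩
      have hlen : q.length + 1 = Γ.dist root x := by
        have := congrArg SimpleGraph.Walk.length hq
        rw [SimpleGraph.Walk.length_reverse, hp] at this
        rw [this]; rfl
      have h1 : Γ.dist root w ≤ q.length := by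
        rw [SimpleGraph.dist_comm]
        exact SimpleGraph.dist_le q
      have h2 : Γ.dist root x ≤ Γ.dist root w + 1 := by
        have htri := h.dist_triangle (u := root) (v := w) (w := x)
        have hwx : Γ.dist w x ≤ 1 := by
          have hadj' : Γ.Adj w x := ⟨fun hh => hne hh.symm, e, heA, by rw [hends, Sym2.eq_swap]⟩
          rw [SimpleGraph.dist_eq_one_iff_adj.mpr hadj']
        omega
      omega
  choose eF wF heA hends hdist using key
  obtain ⟨x0, hx0⟩ := Fintype.exists_ne_of_one_lt_card (by omega) root
  haveI : Nonempty G.E := ⟨eF x0 hx0⟩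
  set f : G.V → G.E := fun y => if hy : y ≠ root then eF y hy else Classical.arbitrary G.E with hf
  have hcard : Finset.card (Finset.univ.erase root) ≤ A.card := by
    refine Finset.card_le_card_of_injOn f ?_ ?_
    · intro y hy
      have hy' : y ≠ root := (Finset.mem_erase.mp hy).1
      simp only [hf, dif_pos hy']
      exact heA y hy'
    · intro y hy z hz hyz
      have hy' : y ≠ root := by simpa using hy
      have hz' : z ≠ root := by simpa using hz
      simp only [hf, dif_pos hy', dif_pos hz'] at hyz
      by_contra hne
      have h1 : G.ends (eF y hy') = s(y, wF y hy') := hends y hy'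
      have h2 : G.ends (eF z hz') = s(z, wF z hz') := hends z hz'
      rw [hyz, h2, Sym2.eq_iff] at h1
      rcases h1 with ⟨ha, hb⟩ | ⟨ha, hb⟩
      · exact hne ha.symm
      · have d1 := hdist y hy'
        have d2 := hdist z hz'
        rw [← ha] at d1
        rw [hb] at d2
        omega
  rw [Finset.card_erase_of_mem (Finset.mem_univ root), Finset.card_univ] at hcard
  omega


/-- For a connected multigraph `G` with `n` vertices and `m` edges, a
gadget `H(u,v)`, and any edge substitution `G[H(u,v)]`:
`Rel(G[H(u,v)];q) = Σ_{i=0}^{m-n+1} F_i · Rel(H;q)^{m-i} · spRel_{u,v}(H;q)^i`. -/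
theorem rel_edgeSub (G Hg : Multigraph) (hG : G.Connected) (hH : Hg.Connected)
    (hcard : 2 ≤ Fintype.card Hg.V) (u v : Hg.V) (huv : u ≠ v)
    (ori : G.E → G.V × G.V) (hori : ∀ e, s((ori e).1, (ori e).2) = G.ends e) :
    (edgeSub G Hg u v ori hori).Rel =
      ∑ i ∈ Finset.range (Fintype.card G.E - Fintype.card G.V + 2),
        C ((G.Fnum i : ℂ)) * Hg.Rel ^ (Fintype.card G.E - i) * (Hg.spRel u v) ^ i := by
  classical
  set B := edgeSub G Hg u v ori hori with hB
  set M := Fintype.card Hg.E with hM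
  set m := Fintype.card G.E with hm
  set n := Fintype.card G.V with hn
  set W : Finset Hg.E → Polynomial ℂ := fun A => (1 - X) ^ A.card * X ^ (M - A.card) with hWdef
  set Cn : Finset Hg.E → Prop := fun A => (Hg.spanningGraph (↑A : Set Hg.E)).Connected with hCn
  set Sp : Finset Hg.E → Prop := fun A => Hg.SplitState u v (↑A : Set Hg.E) with hSp
  set Gc : Finset G.E → Prop :=
    fun T => (G.spanningGraph (↑(Finset.univ \ T) : Set G.E)).Connected with hGc
  have hdisj : ∀ A : Finset Hg.E, Cn A → Sp A → False :=
    fun A hc hs => hs.1 (hc.preconnected u v)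
  have hBE : Fintype.card B.E = m * M :=
    (Fintype.card_congr (Equiv.refl (G.E × Hg.E))).trans (Fintype.card_prod _ _)
  -- basic numeric facts
  have hn1 : 1 ≤ n := Fintype.card_pos_iff.mpr hG.nonempty
  have hnm : n ≤ m + 1 := by
    have := card_le_of_spanning_conn G Finset.univ (by rw [Finset.coe_univ]; exact hG)
    rwa [Finset.card_univ] at this
  -- Step 1: reindex the sum over edge subsets by slice functions
  have step1 : B.Rel = ∑ g : G.E → Finset Hg.E,
      if ((∀ e, Cn (g e) ∨ Sp (g e)) ∧
          (G.spanningGraph {e | Cn (g e)}).Connected)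
        then ∏ e : G.E, W (g e) else 0 := by
    have h0 : B.Rel = ∑ S : Finset B.E,
        if (B.spanningGraph (↑S : Set B.E)).Connected then
          ((1 : Polynomial ℂ) - X) ^ S.card * X ^ (Fintype.card B.E - S.card) else 0 := rfl
    rw [h0]
    have h1 : ∑ S : Finset B.E,
        (if (B.spanningGraph (↑S : Set B.E)).Connected then
          ((1 : Polynomial ℂ) - X) ^ S.card * X ^ (Fintype.card B.E - S.card) else 0) =
        ∑ S : Finset (G.E × Hg.E),
        (if (B.spanningGraph (↑S : Set (G.E × Hg.E))).Connected then
          ((1 : Polynomial ℂ) - X) ^ S.card * X ^ (Fintype.card B.E - S.card) else 0) :=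
      Fintype.sum_equiv (Equiv.refl _) _ _ (fun _ => rfl)
    rw [h1]
    refine (Fintype.sum_equiv (sliceEquiv G.E Hg.E) _ _ (fun g => ?_)).symm
    set S := sliceEquiv G.E Hg.E g with hS
    have hcardS : S.card = ∑ e, (g e).card := sliceEquiv_card g
    have hiff := edgeSub_conn_iff G Hg u v ori hori hcard huv hG (↑S : Set (G.E × Hg.E))
    simp only [hS, sliceEquiv_set] at hiff
    refine (if_congr hiff ?_ rfl).symm
    -- weight factorization
    have hle : ∀ e : G.E, (g e).card ≤ M := fun e => Finset.card_le_univ _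
    have hsum : ∑ e : G.E, (M - (g e).card) + ∑ e : G.E, (g e).card = m * M := by
      rw [← Finset.sum_add_distrib]
      rw [Finset.sum_congr rfl (fun e _ => Nat.sub_add_cancel (hle e))]
      rw [Finset.sum_const, Finset.card_univ, smul_eq_mul]
    have hsub : Fintype.card B.E - S.card = ∑ e : G.E, (M - (g e).card) := by
      rw [hBE, hcardS]
      omega
    rw [hsub, hcardS, hWdef]
    rw [Finset.prod_mul_distrib, Finset.prod_pow_eq_pow_sum, Finset.prod_pow_eq_pow_sum]
  rw [step1]
  -- P-condition
  set P : Finset G.E → (G.E → Finset Hg.E) → Prop :=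
    fun T g => Gc T ∧ ∀ e, (if e ∈ T then Sp (g e) else Cn (g e)) with hP
  -- Step 2: introduce the split-edge set T
  have step2 : ∀ g : G.E → Finset Hg.E,
      (if ((∀ e, Cn (g e) ∨ Sp (g e)) ∧
          (G.spanningGraph {e | Cn (g e)}).Connected)
        then ∏ e : G.E, W (g e) else 0) =
      ∑ T : Finset G.E, if P T g then ∏ e : G.E, W (g e) else 0 := by
    intro g
    by_cases hc : (∀ e, Cn (g e) ∨ Sp (g e)) ∧
        (G.spanningGraph {e | Cn (g e)}).Connected
    · rw [if_pos hc]
      set T₀ : Finset G.E := Finset.univ.filter (fun e => Sp (g e)) with hT₀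
      have hmemT₀ : ∀ e, e ∈ T₀ ↔ Sp (g e) := by
        intro e; simp [hT₀]
      have hCnIff : ∀ e, Cn (g e) ↔ ¬ Sp (g e) := by
        intro e
        constructor
        · exact fun h hs => hdisj _ h hs
        · intro hns
          rcases hc.1 e with h | h
          · exact h
          · exact absurd h hns
      have hPT₀ : P T₀ g := by
        constructor
        · have hseteq : {e | Cn (g e)} = (↑(Finset.univ \ T₀) : Set G.E) := by
            ext e
            simp only [Set.mem_setOf_eq, Finset.coe_sdiff, Finset.coe_univ, Set.mem_diff,
              Set.mem_univ, true_and, Finset.mem_coe, hmemT₀]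
            exact hCnIff e
          have := hc.2
          rwa [hseteq] at this
        · intro e
          by_cases he : e ∈ T₀
          · rw [if_pos he]; exact (hmemT₀ e).1 he
          · rw [if_neg he]; exact (hCnIff e).2 (fun hs => he ((hmemT₀ e).2 hs))
      rw [Finset.sum_eq_single_of_mem T₀ (Finset.mem_univ _) ?uniq, if_pos hPT₀]
      case uniq =>
        intro T _ hT
        rw [if_neg]
        intro hPT
        apply hT
        ext e
        rw [hmemT₀ e]
        constructor
        · intro heT
          have := hPT.2 e
          rwa [if_pos heT] at this
        · intro hs
          by_contra heT
          have := hPT.2 e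
          rw [if_neg heT] at this
          exact hdisj _ this hs
    · rw [if_neg hc]
      refine (Finset.sum_eq_zero fun T _ => ?_).symm
      rw [if_neg]
      intro hPT
      apply hc
      have hallCS : ∀ e, Cn (g e) ∨ Sp (g e) := by
        intro e
        have := hPT.2 e
        by_cases he : e ∈ T
        · rw [if_pos he] at this; exact Or.inr this
        · rw [if_neg he] at this; exact Or.inl this
      refine ⟨hallCS, ?_⟩
      have hseteq : {e | Cn (g e)} = (↑(Finset.univ \ T) : Set G.E) := by
        ext e
        simp only [Set.mem_setOf_eq, Finset.coe_sdiff, Finset.coe_univ, Set.mem_diff,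
          Set.mem_univ, true_and, Finset.mem_coe]
        constructor
        · intro hcn heT
          have := hPT.2 e
          rw [if_pos heT] at this
          exact hdisj _ hcn this
        · intro heT
          have := hPT.2 e
          rwa [if_neg heT] at this
      rw [hseteq]
      exact hPT.1
  rw [Finset.sum_congr rfl (fun g _ => step2 g), Finset.sum_comm]
  -- Step 3: factor the inner sum
  have step3 : ∀ T : Finset G.E,
      (∑ g : G.E → Finset Hg.E, if P T g then ∏ e : G.E, W (g e) else 0) =
      if Gc T then (Hg.spRel u v) ^ T.card * Hg.Rel ^ (m - T.card) else 0 := by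
    intro T
    have hfac : ∀ g : G.E → Finset Hg.E,
        (if P T g then ∏ e : G.E, W (g e) else 0) =
        (if Gc T then (1 : Polynomial ℂ) else 0) *
          ∏ e : G.E, (if (if e ∈ T then Sp (g e) else Cn (g e)) then W (g e) else 0) := by
      intro g
      by_cases hGcT : Gc T
      · rw [if_pos hGcT, one_mul]
        by_cases hall : ∀ e, (if e ∈ T then Sp (g e) else Cn (g e))
        · rw [if_pos ⟨hGcT, hall⟩]
          exact Finset.prod_congr rfl (fun e _ => (if_pos (hall e)).symm)
        · push_neg at hall
          obtain ⟨e₀, he₀⟩ := hall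
          rw [if_neg (fun hPT => he₀ (hPT.2 e₀))]
          symm
          apply Finset.prod_eq_zero (Finset.mem_univ e₀)
          rw [if_neg he₀]
      · rw [if_neg hGcT, zero_mul, if_neg (fun hPT => hGcT hPT.1)]
    rw [Finset.sum_congr rfl (fun g _ => hfac g), ← Finset.mul_sum]
    have hswap : ∑ g : G.E → Finset Hg.E,
        ∏ e : G.E, (if (if e ∈ T then Sp (g e) else Cn (g e)) then W (g e) else 0) =
        ∏ e : G.E, ∑ A : Finset Hg.E, (if (if e ∈ T then Sp A else Cn A) then W A else 0) := by
      rw [Finset.prod_univ_sum, Fintype.piFinset_univ]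
    rw [hswap]
    have hinner : ∀ e : G.E,
        (∑ A : Finset Hg.E, (if (if e ∈ T then Sp A else Cn A) then W A else 0)) =
        if e ∈ T then Hg.spRel u v else Hg.Rel := by
      intro e
      by_cases he : e ∈ T
      · rw [if_pos he]
        simp only [if_pos he]
        rfl
      · rw [if_neg he]
        simp only [if_neg he]
        rfl
    rw [Finset.prod_congr rfl (fun e _ => hinner e), Finset.prod_ite, Finset.prod_const,
      Finset.prod_const]
    have h1 : Finset.univ.filter (fun e => e ∈ T) = T := by
      ext e; simp
    have h2 : (Finset.univ.filter (fun e : G.E => ¬ e ∈ T)).card = m - T.card := by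
      have : Finset.univ.filter (fun e : G.E => ¬ e ∈ T) = Finset.univ \ T := by
        ext e; simp
      rw [this, Finset.card_sdiff_of_subset (Finset.subset_univ T), Finset.card_univ]
    rw [h1, h2]
    by_cases hGcT : Gc T
    · rw [if_pos hGcT, if_pos hGcT, one_mul]
    · rw [if_neg hGcT, if_neg hGcT, zero_mul]
  rw [Finset.sum_congr rfl (fun T _ => step3 T)]
  -- Step 4: group by cardinality
  have step4 : ∑ T : Finset G.E,
      (if Gc T then (Hg.spRel u v) ^ T.card * Hg.Rel ^ (m - T.card) else 0) =
      ∑ i ∈ Finset.range (m + 1), (G.Fnum i : Polynomial ℂ) *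
        ((Hg.spRel u v) ^ i * Hg.Rel ^ (m - i)) := by
    rw [← Finset.sum_fiberwise_of_maps_to (g := Finset.card) (t := Finset.range (m + 1))
      (fun T _ => Finset.mem_range.mpr (Nat.lt_succ_of_le (Finset.card_le_univ T)))]
    refine Finset.sum_congr rfl fun i _ => ?_
    have hval : ∀ T ∈ Finset.univ.filter (fun T : Finset G.E => T.card = i),
        (if Gc T then (Hg.spRel u v) ^ T.card * Hg.Rel ^ (m - T.card) else 0) =
        (if Gc T then (Hg.spRel u v) ^ i * Hg.Rel ^ (m - i) else 0) := by
      intro T hT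
      rw [(Finset.mem_filter.mp hT).2]
    rw [Finset.sum_congr rfl hval, Finset.sum_ite, Finset.sum_const, Finset.sum_const_zero,
      add_zero, Finset.filter_filter]
    have hFnum : (Finset.univ.filter fun T : Finset G.E => T.card = i ∧ Gc T).card = G.Fnum i :=
      rfl
    rw [hFnum, nsmul_eq_mul]
  rw [step4]
  -- Step 5: adjust the range and the shape of the summand
  have hvan : ∀ i : ℕ, (m - n + 2 ≤ i ∨ m < i) →
      (G.Fnum i : Polynomial ℂ) * ((Hg.spRel u v) ^ i * Hg.Rel ^ (m - i)) = 0 := by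
    intro i hi
    have hF : G.Fnum i = 0 := by
      rw [Fnum, Finset.card_eq_zero, Finset.filter_eq_empty_iff]
      rintro T - ⟨hTc, hTconn⟩
      have hTm : T.card ≤ m := by
        have := Finset.card_le_univ T
        simp only [Finset.card_univ, ← hm] at this ⊢
        omega
      have hcs := card_le_of_spanning_conn G (Finset.univ \ T) hTconn
      rw [Finset.card_sdiff_of_subset (Finset.subset_univ T), Finset.card_univ, ← hm, ← hn, hTc] at hcs
      clear_value m n
      omega
    rw [hF]
    simp
  have hshape : ∀ i, C ((G.Fnum i : ℂ)) * Hg.Rel ^ (m - i) * (Hg.spRel u v) ^ i =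
      (G.Fnum i : Polynomial ℂ) * ((Hg.spRel u v) ^ i * Hg.Rel ^ (m - i)) := by
    intro i
    rw [show C ((G.Fnum i : ℂ)) = ((G.Fnum i : ℕ) : Polynomial ℂ) from map_natCast C _]
    ring
  rw [Finset.sum_congr rfl (fun i _ => hshape i)]
  have hK1 : m + 1 ≤ max (m + 1) (m - n + 2) := le_max_left _ _
  have hK2 : m - n + 2 ≤ max (m + 1) (m - n + 2) := le_max_right _ _
  calc ∑ i ∈ Finset.range (m + 1), (G.Fnum i : Polynomial ℂ) *
        ((Hg.spRel u v) ^ i * Hg.Rel ^ (m - i))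
      = ∑ i ∈ Finset.range (max (m + 1) (m - n + 2)), (G.Fnum i : Polynomial ℂ) *
        ((Hg.spRel u v) ^ i * Hg.Rel ^ (m - i)) := by
        refine Finset.sum_subset (Finset.range_subset_range.mpr hK1) (fun i _ hni => ?_)
        refine hvan i (Or.inr ?_)
        by_contra h
        push_neg at h
        exact hni (Finset.mem_range.mpr (by omega))
    _ = ∑ i ∈ Finset.range (m - n + 2), (G.Fnum i : Polynomial ℂ) *
        ((Hg.spRel u v) ^ i * Hg.Rel ^ (m - i)) := by
        refine (Finset.sum_subset (Finset.range_subset_range.mpr hK2) (fun i _ hni => ?_)).symm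
        exact hvan i (Or.inl (le_of_not_gt (fun h => hni (Finset.mem_range.mpr h))))

end Multigraph
end
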